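/- arXiv:0810.2517 — 7 statements merged into one kernel-verified Lean document; each statement's English description precedes it below -/
import Mathlib

section
/- Fix ε > 0, δ > 0, ν ∈ ℝ, p ∈ ℤ and t ≥ 0, set σ(k) = (24ε/δ⁴) sin⁴(k/2), and define v_n(t) = (ν/(2π)) ∫_{−π}^{π} e^{i k (n−p) − σ(k) t} dk for n ∈ ℤ. Then there exist constants C > 0 and c > 0 (depending on ε, δ, ν and t but not on n) such that |v_n(t)| ≤ C e^{−c |n−p|} for all n ∈ ℤ; i.e. the delta-function initial perturbation remains exponentially localized in component number, so the linearized step-flow system is strongly local. -/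
/-! With `m = n - p` the integrand is `exp (i k m) * f k`, where
`f z = exp (-(24 ε t / δ⁴) sin⁴ (z / 2))` is entire and `2π`-periodic. For such `f`, Cauchy's
theorem on the rectangle `[-π, π] × [0, η]` moves the line of integration to `Im k = η`, the
vertical sides cancelling by periodicity. Taking `η = ±1` with the sign of `m` turns `exp (i k m)`
into `exp (-|m|)`, while `f` stays bounded on the compact strip `|Re z| ≤ π, |Im z| ≤ 1`. -/

open Complex Real Function

theorem Function.Periodic.intervalIntegral_add_mul_I
    {E : Type*} [NormedAddCommGroup E] [NormedSpace ℂ E] [CompleteSpace E]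
    {f : ℂ → E} {T : ℝ} (hf : Differentiable ℂ f) (hT : Periodic f T) (a η : ℝ) :
    ∫ x in a..a + T, f (x + η * I) = ∫ x in a..a + T, f x := by
  have hrect := integral_boundary_rect_eq_zero_of_differentiableOn f ⟨a, 0⟩ ⟨a + T, η⟩
    hf.differentiableOn
  have hsides : ∫ y in (0 : ℝ)..η, f (↑(a + T) + y * I) = ∫ y in (0 : ℝ)..η, f (a + y * I) := by
    refine intervalIntegral.integral_congr fun y _ => ?_
    rw [← hT (a + y * I)]
    push_cast
    ring_nf
  simp only [hsides, ofReal_zero, zero_mul, add_zero, add_sub_cancel_right] at hrect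
  exact (sub_eq_zero.mp hrect).symm

theorem norm_integral_exp_mul_le_of_periodic {f : ℂ → ℂ} (hf : Differentiable ℂ f)
    (hper : Periodic f (2 * π)) {r M : ℝ} (hr : 0 ≤ r)
    (hM : ∀ x ∈ Set.Icc (-π) π, ∀ η : ℝ, |η| ≤ r → ‖f (x + η * I)‖ ≤ M) (m : ℤ) :
    ‖∫ x in -π..π, cexp (I * x * m) * f x‖ ≤ 2 * π * M * Real.exp (-r * |(m : ℝ)|) := by
  obtain ⟨η, hη, hηm⟩ : ∃ η : ℝ, |η| ≤ r ∧ η * m = r * |(m : ℝ)| := by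
    rcases le_or_gt 0 (m : ℝ) with hm | hm
    · exact ⟨r, (abs_of_nonneg hr).le, by rw [abs_of_nonneg hm]⟩
    · exact ⟨-r, (abs_neg r).trans (abs_of_nonneg hr) |>.le, by rw [abs_of_neg hm]; ring⟩
  have hg : Periodic (fun z => cexp (I * z * m) * f z) (2 * π : ℝ) := by
    intro z
    push_cast
    simp only [hper z, mul_add, add_mul, Complex.exp_add]
    rw [show I * (2 * π) * m = m * (2 * π * I) by ring, exp_int_mul_two_pi_mul_I, mul_one]
  have hshift := hg.intervalIntegral_add_mul_I (by fun_prop) (-π) η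
  rw [show -π + 2 * π = π by ring] at hshift
  rw [← hshift]
  have hbound : ∀ x ∈ Set.uIoc (-π) π, ‖cexp (I * (x + η * I) * m) * f (x + η * I)‖ ≤
      Real.exp (-r * |(m : ℝ)|) * M := by
    intro x hx
    have hx' : x ∈ Set.Icc (-π) π := by
      simpa [Set.uIcc_of_le (by linarith [pi_pos] : -π ≤ π)] using Set.uIoc_subset_uIcc hx
    rw [norm_mul, norm_exp]
    gcongr
    · apply le_of_eq
      rw [neg_mul, ← hηm]
      simp [mul_re, mul_im]
    · exact hM x hx' η hη
  refine (intervalIntegral.norm_integral_le_of_norm_le_const hbound).trans_eq ?_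
  rw [abs_of_pos (by linarith [pi_pos] : 0 < π - -π)]
  ring

theorem exists_norm_integral_exp_mul_le_of_periodic {f : ℂ → ℂ} (hf : Differentiable ℂ f)
    (hper : Periodic f (2 * π)) :
    ∃ C > 0, ∃ c > 0, ∀ m : ℤ,
      ‖∫ x in -π..π, cexp (I * x * m) * f x‖ ≤ C * Real.exp (-c * |(m : ℝ)|) := by
  obtain ⟨M, hM⟩ := (isCompact_closedBall (0 : ℂ) (π + 1)).exists_bound_of_continuousOn
    hf.continuous.continuousOn
  have hstrip : ∀ x ∈ Set.Icc (-π) π, ∀ η : ℝ, |η| ≤ 1 → ‖f (x + η * I)‖ ≤ max M 1 := by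
    intro x hx η hη
    refine (hM _ ?_).trans (le_max_left _ _)
    rw [Metric.mem_closedBall, dist_zero_right]
    refine (norm_add_le _ _).trans ?_
    simp only [norm_real, norm_mul, norm_I, mul_one, Real.norm_eq_abs]
    linarith [abs_le.mpr hx]
  exact ⟨2 * π * max M 1, by positivity, 1, one_pos,
    norm_integral_exp_mul_le_of_periodic hf hper zero_le_one hstrip⟩

theorem stmt_5_general (ε δ ν t : ℝ) (p : ℤ)
    (σ : ℝ → ℝ) (hσ : ∀ x : ℝ, σ x = 24 * ε / δ ^ 4 * Real.sin (x / 2) ^ 4)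
    (v : ℤ → ℂ)
    (hv : ∀ n : ℤ,
      v n = ((ν / (2 * Real.pi) : ℝ) : ℂ) *
        ∫ k in (-Real.pi)..Real.pi,
          Complex.exp (Complex.I * (k : ℂ) * ((n : ℂ) - (p : ℂ)) - ((σ k * t : ℝ) : ℂ))) :
    ∃ C > (0 : ℝ), ∃ c > (0 : ℝ), ∀ n : ℤ,
      ‖v n‖ ≤ C * Real.exp (-c * ((|n - p| : ℤ) : ℝ)) := by
  set f : ℂ → ℂ := fun z => cexp (-((24 * ε / δ ^ 4 * t : ℝ) : ℂ) * Complex.sin (z / 2) ^ 4)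
  have hper : Periodic f (2 * π) := fun z => by
    simp only [f]
    rw [show (z + 2 * π) / 2 = z / 2 + π by ring, Complex.sin_add_pi, Even.neg_pow (by decide)]
  obtain ⟨C, hC, c, hc, hdecay⟩ :=
    exists_norm_integral_exp_mul_le_of_periodic (by fun_prop : Differentiable ℂ f) hper
  have hvn : ∀ n : ℤ, v n = ((ν / (2 * π) : ℝ) : ℂ) *
      ∫ k in -π..π, cexp (I * k * ((n - p : ℤ) : ℂ)) * f k := by
    intro n
    rw [hv n]
    congr 1
    refine intervalIntegral.integral_congr fun k _ => ?_
    simp only [f, ← Complex.exp_add, hσ]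
    push_cast
    ring_nf
  refine ⟨(|ν / (2 * π)| + 1) * C, by positivity, c, hc, fun n => ?_⟩
  rw [hvn, norm_mul, norm_real, Real.norm_eq_abs, Int.cast_abs, mul_assoc]
  exact mul_le_mul (le_add_of_nonneg_right zero_le_one) (hdecay _) (norm_nonneg _) (by positivity)

theorem stmt_5 (ε δ ν t : ℝ) (hε : 0 < ε) (hδ : 0 < δ) (p : ℤ) (ht : 0 ≤ t)
    (σ : ℝ → ℝ) (hσ : ∀ x : ℝ, σ x = 24 * ε / δ ^ 4 * Real.sin (x / 2) ^ 4)
    (v : ℤ → ℂ)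
    (hv : ∀ n : ℤ,
      v n = ((ν / (2 * Real.pi) : ℝ) : ℂ) *
        ∫ k in (-Real.pi)..Real.pi,
          Complex.exp (Complex.I * (k : ℂ) * ((n : ℂ) - (p : ℂ)) - ((σ k * t : ℝ) : ℂ))) :
    ∃ C > (0 : ℝ), ∃ c > (0 : ℝ), ∀ n : ℤ,
      ‖v n‖ ≤ C * Real.exp (-c * ((|n - p| : ℤ) : ℝ)) :=
  stmt_5_general ε δ ν t p σ hσ v hv
end

section
/- Let f : ℝ → ℝ be smooth (C^∞), let y₀ ∈ ℝ, and let y be the solution of y' = f(y), y(0) = y₀, defined on a neighborhood of 0. For Δt > 0 define the classical RK4 stages k₁ = Δt f(y₀), k₂ = Δt f(y₀ + k₁/2), k₃ = Δt f(y₀ + k₂/2), k₄ = Δt f(y₀ + k₃). Then the one-step error of the classical fourth-order Runge–Kutta method satisfies y₀ + (k₁ + 2k₂ + 2k₃ + k₄)/6 − y(Δt) = O(Δt⁵) as Δt → 0⁺; equivalently y₀ + Σ cᵢkᵢ = y₀ + Δt y'(0) + (Δt²/2) y''(0) + (Δt³/6) y'''(0) + (Δt⁴/24) y⁗(0) + O(Δt⁵).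 -/
open scoped Topology
open Filter Asymptotics

private lemma iterDeriv_congr : ∀ (n : ℕ) (g₁ g₂ : ℝ → ℝ) (x : ℝ),
    g₁ =ᶠ[𝓝 x] g₂ → iteratedDeriv n g₁ x = iteratedDeriv n g₂ x := by
  intro n
  induction n with
  | zero => intro g₁ g₂ x h; simpa using h.self_of_nhds
  | succ n ih =>
    intro g₁ g₂ x h
    rw [iteratedDeriv_succ', iteratedDeriv_succ']
    exact ih _ _ _ h.deriv

private lemma iterStep {s : Set ℝ} (hs : IsOpen s) (u v : ℝ → ℝ)
    (huv : ∀ x ∈ s, HasDerivAt u (v x) x) (n : ℕ) {x : ℝ} (hx : x ∈ s) :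
    iteratedDeriv (n + 1) u x = iteratedDeriv n v x := by
  rw [iteratedDeriv_succ']
  refine iterDeriv_congr n _ _ x ?_
  filter_upwards [hs.mem_nhds hx] with y hy using (huv y hy).deriv

private lemma auxH : ∀ (n : ℕ) (g : ℝ → ℝ) (s : Set ℝ), IsOpen s → (0:ℝ) ∈ s →
    ContDiffOn ℝ (n+1) g s → (∀ i ≤ n, iteratedDeriv i g 0 = 0) →
    g =O[𝓝 (0:ℝ)] fun x => x ^ (n+1) := by
  intro n
  induction n with
  | zero =>
    intro g s hs h0 hg hv
    have hd : DifferentiableAt ℝ g 0 :=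
      (hg.differentiableOn (by norm_num) 0 h0).differentiableAt (hs.mem_nhds h0)
    have h := hd.hasDerivAt.isBigO_sub
    have h0' : g 0 = 0 := by simpa using hv 0 le_rfl
    simpa [h0'] using h
  | succ n ih =>
    intro g s hs h0 hg hv
    have hg' : ContDiffOn ℝ (n+1) (deriv g) s := by
      refine hg.deriv_of_isOpen hs ?_
      norm_cast
    have hv' : ∀ i ≤ n, iteratedDeriv i (deriv g) 0 = 0 := by
      intro i hi
      have := hv (i+1) (by omega)
      rwa [iteratedDeriv_succ'] at this
    have hder := ih (deriv g) s hs h0 hg' hv'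
    rw [isBigO_iff] at hder
    obtain ⟨c, hc⟩ := hder
    rw [Metric.eventually_nhds_iff] at hc
    obtain ⟨δ, hδ, hbound⟩ := hc
    obtain ⟨δ', hδ', hball⟩ := Metric.isOpen_iff.1 hs 0 h0
    set δ₀ := min δ δ' with hδ₀
    have hδ₀pos : 0 < δ₀ := lt_min hδ hδ'
    have hg0 : g 0 = 0 := by simpa using hv 0 (by omega)
    rw [isBigO_iff]
    refine ⟨|c|, ?_⟩
    rw [Metric.eventually_nhds_iff]
    refine ⟨δ₀, hδ₀pos, ?_⟩
    intro x hxd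
    simp only [Real.dist_eq, sub_zero] at hxd
    -- mean value on segment 0 x
    have hseg : ∀ z ∈ segment ℝ (0:ℝ) x, |z| ≤ |x| := by
      intro z hz
      rw [segment_eq_image] at hz
      obtain ⟨a, ha, rfl⟩ := hz
      simp only [smul_eq_mul]
      have hrw : (1 - a) * 0 + a * x = a * x := by ring
      rw [hrw, abs_mul]
      calc |a| * |x| ≤ 1 * |x| := by
            apply mul_le_mul_of_nonneg_right _ (abs_nonneg _)
            rw [abs_le]; constructor <;> [linarith [ha.1]; linarith [ha.2]]
        _ = |x| := one_mul _
    have key : ‖g x - g 0‖ ≤ (|c| * |x|^(n+1)) * ‖x - (0:ℝ)‖ := by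
      apply Convex.norm_image_sub_le_of_norm_hasDerivWithin_le
        (f' := deriv g) (s := segment ℝ (0:ℝ) x)
      · intro z hz
        have hzb : z ∈ s := by
          apply hball
          simp only [Metric.mem_ball, Real.dist_eq, sub_zero]
          exact lt_of_le_of_lt (hseg z hz) (lt_of_lt_of_le hxd (min_le_right _ _))
        exact ((hg.differentiableOn (by norm_num) z hzb).differentiableAt
          (hs.mem_nhds hzb)).hasDerivAt.hasDerivWithinAt
      · intro z hz
        have hzd : dist z 0 < δ := by
          simp only [Real.dist_eq, sub_zero]
          exact lt_of_le_of_lt (hseg z hz) (lt_of_lt_of_le hxd (min_le_left _ _))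
        have h1 := hbound hzd
        calc ‖deriv g z‖ ≤ c * ‖z ^ (n+1)‖ := h1
          _ ≤ |c| * ‖z ^ (n+1)‖ := by
              apply mul_le_mul_of_nonneg_right (le_abs_self c) (norm_nonneg _)
          _ ≤ |c| * |x|^(n+1) := by
              apply mul_le_mul_of_nonneg_left _ (abs_nonneg _)
              rw [Real.norm_eq_abs, abs_pow]
              exact pow_le_pow_left₀ (abs_nonneg _) (hseg z hz) _
      · exact convex_segment _ _
      · exact left_mem_segment ℝ 0 x
      · exact right_mem_segment ℝ 0 x
    rw [hg0, sub_zero] at key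
    calc ‖g x‖ ≤ (|c| * |x|^(n+1)) * ‖x - 0‖ := key
      _ = |c| * ‖x ^ (n+1+1)‖ := by
          rw [sub_zero, Real.norm_eq_abs, Real.norm_eq_abs, abs_pow]
          ring

private lemma polyHasDeriv (b0 b1 b2 b3 b4 x : ℝ) :
    HasDerivAt (fun t : ℝ => b0 + b1*t + b2*t^2/2 + b3*t^3/6 + b4*t^4/24)
      (b1 + b2*x + b3*x^2/2 + b4*x^3/6) x := by
  have h := (((((hasDerivAt_id' x).const_mul b1).const_add b0).add
      (((hasDerivAt_pow 2 x).const_mul b2).div_const 2)).add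
      (((hasDerivAt_pow 3 x).const_mul b3).div_const 6)).add
      (((hasDerivAt_pow 4 x).const_mul b4).div_const 24)
  refine h.congr_deriv ?_
  push_cast
  ring

set_option maxHeartbeats 4000000 in
theorem stmt_9 (f : ℝ → ℝ) (hf : ContDiff ℝ (⊤ : ℕ∞) f) (y₀ : ℝ) (y : ℝ → ℝ)
    (ε : ℝ) (hε : 0 < ε) (hy0 : y 0 = y₀)
    (hy : ∀ t ∈ Set.Ioo (-ε) ε, HasDerivAt y (f (y t)) t)
    (k₁ k₂ k₃ k₄ : ℝ → ℝ)
    (hk₁ : ∀ Δt : ℝ, k₁ Δt = Δt * f y₀)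
    (hk₂ : ∀ Δt : ℝ, k₂ Δt = Δt * f (y₀ + k₁ Δt / 2))
    (hk₃ : ∀ Δt : ℝ, k₃ Δt = Δt * f (y₀ + k₂ Δt / 2))
    (hk₄ : ∀ Δt : ℝ, k₄ Δt = Δt * f (y₀ + k₃ Δt)) :
    (fun Δt : ℝ => y₀ + (k₁ Δt + 2 * k₂ Δt + 2 * k₃ Δt + k₄ Δt) / 6 - y Δt)
      =O[𝓝[>] (0 : ℝ)] fun Δt : ℝ => Δt ^ 5 := by
  have hfi : ∀ j : ℕ, ContDiff ℝ (⊤ : ℕ∞) (iteratedDeriv j f) := by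
    intro j
    rw [iteratedDeriv_eq_iterate]
    exact (hf.of_le (by simp)).iterate_deriv j
  have Hd : ∀ (j : ℕ) (u : ℝ), HasDerivAt (iteratedDeriv j f) (iteratedDeriv (j+1) f u) u := by
    intro j u
    have h1 := ((hfi j).differentiable (by simp) u).hasDerivAt
    rwa [← iteratedDeriv_succ] at h1
  have Hd0 : ∀ u : ℝ, HasDerivAt f (deriv f u) u := by
    intro u
    have := Hd 0 u
    rwa [iteratedDeriv_zero, iteratedDeriv_one] at this
  have Hd1 : ∀ u : ℝ, HasDerivAt (deriv f) (iteratedDeriv 2 f u) u := by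
    intro u
    have := Hd 1 u
    rwa [iteratedDeriv_one] at this
  have Hd2 : ∀ u : ℝ, HasDerivAt (iteratedDeriv 2 f) (iteratedDeriv 3 f u) u := fun u => Hd 2 u
  set S : Set ℝ := Set.Ioo (-ε) ε with hS
  have hSo : IsOpen S := isOpen_Ioo
  have h0S : (0:ℝ) ∈ S := ⟨by linarith, hε⟩
  have hyC : ∀ n : ℕ, ContDiffOn ℝ n y S := by
    intro n
    induction n with
    | zero =>
      have : ContinuousOn y S := fun t ht => ((hy t ht).differentiableAt.continuousAt).continuousWithinAt
      exact_mod_cast contDiffOn_zero.mpr this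
    | succ n ih =>
      have : ContDiffOn ℝ ((n : WithTop ℕ∞) + 1) y S := by
        rw [contDiffOn_succ_iff_deriv_of_isOpen hSo]
        refine ⟨fun t ht => (hy t ht).differentiableAt.differentiableWithinAt, ?_, ?_⟩
        · intro h; exact absurd h (by simp)
        · exact ((hf.of_le (by exact_mod_cast le_top)).comp_contDiffOn ih).congr fun t ht => (hy t ht).deriv
      exact_mod_cast this
  -- abbreviations
  set A := f y₀ with hA
  set B := deriv f y₀ with hB
  set C2 := iteratedDeriv 2 f y₀ with hC2
  set C3 := iteratedDeriv 3 f y₀ with hC3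
  set a2 := B*A with ha2
  set a3 := C2*A^2 + B^2*A with ha3
  set a4 := C3*A^3 + 4*C2*B*A^2 + B^3*A with ha4
  set Tp : ℝ → ℝ := fun t => y₀ + A*t + a2*t^2/2 + a3*t^3/6 + a4*t^4/24 with hTp
  set w0 : ℝ → ℝ := fun t => y t - (y₀ + A*t + a2*t^2/2 + a3*t^3/6 + a4*t^4/24) with hw0
  set w1 : ℝ → ℝ := fun t => f (y t) - (A + a2*t + a3*t^2/2 + a4*t^3/6 + 0*t^4/24) with hw1
  set w2 : ℝ → ℝ := fun t => deriv f (y t) * f (y t) - (a2 + a3*t + a4*t^2/2 + 0*t^3/6 + 0*t^4/24) with hw2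
  set w3 : ℝ → ℝ := fun t => iteratedDeriv 2 f (y t) * (f (y t))^2 + (deriv f (y t))^2 * f (y t)
      - (a3 + a4*t + 0*t^2/2 + 0*t^3/6 + 0*t^4/24) with hw3
  set w4 : ℝ → ℝ := fun t => iteratedDeriv 3 f (y t) * (f (y t))^3
      + 4 * (iteratedDeriv 2 f (y t) * deriv f (y t) * (f (y t))^2)
      + (deriv f (y t))^3 * f (y t) - a4 with hw4
  have h01 : ∀ x ∈ S, HasDerivAt w0 (w1 x) x := by
    intro x hx
    rw [hw0, hw1]
    have h := (hy x hx).sub (polyHasDeriv y₀ A a2 a3 a4 x)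
    refine h.congr_deriv ?_
    ring
  have h12 : ∀ x ∈ S, HasDerivAt w1 (w2 x) x := by
    intro x hx
    rw [hw1, hw2]
    have hc : HasDerivAt (fun t => f (y t)) (deriv f (y x) * f (y x)) x :=
      (Hd0 (y x)).comp x (hy x hx)
    have h := hc.sub (polyHasDeriv A a2 a3 a4 0 x)
    refine h.congr_deriv ?_
    ring
  have h23 : ∀ x ∈ S, HasDerivAt w2 (w3 x) x := by
    intro x hx
    rw [hw2, hw3]
    have hc1 : HasDerivAt (fun t => deriv f (y t)) (iteratedDeriv 2 f (y x) * f (y x)) x :=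
      (Hd1 (y x)).comp x (hy x hx)
    have hc2 : HasDerivAt (fun t => f (y t)) (deriv f (y x) * f (y x)) x :=
      (Hd0 (y x)).comp x (hy x hx)
    have h := (hc1.mul hc2).sub (polyHasDeriv a2 a3 a4 0 0 x)
    refine h.congr_deriv ?_
    ring
  have h34 : ∀ x ∈ S, HasDerivAt w3 (w4 x) x := by
    intro x hx
    rw [hw3, hw4]
    have hc0 : HasDerivAt (fun t => f (y t)) (deriv f (y x) * f (y x)) x :=
      (Hd0 (y x)).comp x (hy x hx)
    have hc1 : HasDerivAt (fun t => deriv f (y t)) (iteratedDeriv 2 f (y x) * f (y x)) x :=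
      (Hd1 (y x)).comp x (hy x hx)
    have hc2 : HasDerivAt (fun t => iteratedDeriv 2 f (y t)) (iteratedDeriv 3 f (y x) * f (y x)) x :=
      (Hd2 (y x)).comp x (hy x hx)
    have hp2 : HasDerivAt (fun t => (f (y t))^2) ((2:ℕ) * (f (y x))^1 * (deriv f (y x) * f (y x))) x :=
      hc0.pow 2
    have hq2 : HasDerivAt (fun t => (deriv f (y t))^2)
        ((2:ℕ) * (deriv f (y x))^1 * (iteratedDeriv 2 f (y x) * f (y x))) x := hc1.pow 2
    have h := ((hc2.mul hp2).add (hq2.mul hc0)).sub (polyHasDeriv a3 a4 0 0 0 x)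
    refine h.congr_deriv ?_
    push_cast
    ring
  have hvanY : ∀ i ≤ 4, iteratedDeriv i w0 0 = 0 := by
    intro i hi
    interval_cases i
    · rw [iteratedDeriv_zero]; simp only [hw0, hy0]; ring
    · rw [iterStep hSo w0 w1 h01 0 h0S, iteratedDeriv_zero]
      simp only [hw1, hy0, hA]; ring
    · rw [iterStep hSo w0 w1 h01 1 h0S, iterStep hSo w1 w2 h12 0 h0S, iteratedDeriv_zero]
      simp only [hw2, hy0, ha2, hA, hB]; ring
    · rw [iterStep hSo w0 w1 h01 2 h0S, iterStep hSo w1 w2 h12 1 h0S,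
        iterStep hSo w2 w3 h23 0 h0S, iteratedDeriv_zero]
      simp only [hw3, hy0, ha3, hA, hB, hC2]; ring
    · rw [iterStep hSo w0 w1 h01 3 h0S, iterStep hSo w1 w2 h12 2 h0S,
        iterStep hSo w2 w3 h23 1 h0S, iterStep hSo w3 w4 h34 0 h0S, iteratedDeriv_zero]
      simp only [hw4, hy0, ha4, hA, hB, hC2, hC3]; ring
  have hw0cd : ContDiffOn ℝ ((4:ℕ)+1) w0 S := by
    have hpoly : ContDiff ℝ ((5:ℕ) : WithTop ℕ∞)
        (fun t : ℝ => y₀ + A*t + a2*t^2/2 + a3*t^3/6 + a4*t^4/24) := by fun_prop (disch := norm_num)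
    rw [hw0]
    exact_mod_cast (hyC 5).sub hpoly.contDiffOn
  have hyO : w0 =O[𝓝 (0:ℝ)] fun t => t^5 := auxH 4 w0 S hSo h0S hw0cd hvanY
  -- Taylor expansion fact for f at y₀
  set v0 : ℝ → ℝ := fun h => f (y₀ + h) - (A + B*h + C2/2*h^2 + C3/6*h^3) with hv0
  set v1 : ℝ → ℝ := fun h => deriv f (y₀ + h) - (B + C2*h + C3/2*h^2) with hv1
  set v2 : ℝ → ℝ := fun h => iteratedDeriv 2 f (y₀ + h) - (C2 + C3*h) with hv2
  set v3 : ℝ → ℝ := fun h => iteratedDeriv 3 f (y₀ + h) - C3 with hv3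
  have hyaff : ∀ x : ℝ, HasDerivAt (fun h : ℝ => y₀ + h) 1 x := fun x => by
    simpa using (hasDerivAt_id x).const_add y₀
  have g01 : ∀ x ∈ (Set.univ : Set ℝ), HasDerivAt v0 (v1 x) x := by
    intro x _
    rw [hv0, hv1]
    have hc : HasDerivAt (fun h : ℝ => f (y₀ + h)) (deriv f (y₀ + x) * 1) x :=
      (Hd0 (y₀+x)).comp x (hyaff x)
    have hp : HasDerivAt (fun h : ℝ => A + B*h + C2/2*h^2 + C3/6*h^3)
        (B*1 + C2/2*((2:ℕ)*x^1) + C3/6*((3:ℕ)*x^2)) x :=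
      ((((hasDerivAt_id' x).const_mul B).const_add A).add
        ((hasDerivAt_pow 2 x).const_mul (C2/2))).add ((hasDerivAt_pow 3 x).const_mul (C3/6))
    have h := hc.sub hp
    refine h.congr_deriv ?_
    push_cast
    ring
  have g12 : ∀ x ∈ (Set.univ : Set ℝ), HasDerivAt v1 (v2 x) x := by
    intro x _
    rw [hv1, hv2]
    have hc : HasDerivAt (fun h : ℝ => deriv f (y₀ + h)) (iteratedDeriv 2 f (y₀ + x) * 1) x :=
      (Hd1 (y₀+x)).comp x (hyaff x)
    have hp : HasDerivAt (fun h : ℝ => B + C2*h + C3/2*h^2)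
        (C2*1 + C3/2*((2:ℕ)*x^1)) x :=
      (((hasDerivAt_id' x).const_mul C2).const_add B).add ((hasDerivAt_pow 2 x).const_mul (C3/2))
    have h := hc.sub hp
    refine h.congr_deriv ?_
    push_cast
    ring
  have g23 : ∀ x ∈ (Set.univ : Set ℝ), HasDerivAt v2 (v3 x) x := by
    intro x _
    rw [hv2, hv3]
    have hc : HasDerivAt (fun h : ℝ => iteratedDeriv 2 f (y₀ + h)) (iteratedDeriv 3 f (y₀ + x) * 1) x :=
      (Hd2 (y₀+x)).comp x (hyaff x)
    have hp : HasDerivAt (fun h : ℝ => C2 + C3*h) (C3*1) x :=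
      ((hasDerivAt_id' x).const_mul C3).const_add C2
    have h := hc.sub hp
    refine h.congr_deriv ?_
    ring
  have hvanT : ∀ i ≤ 3, iteratedDeriv i v0 0 = 0 := by
    intro i hi
    interval_cases i
    · rw [iteratedDeriv_zero]; simp only [hv0, hA]; simp
    · rw [iterStep isOpen_univ v0 v1 g01 0 (Set.mem_univ 0), iteratedDeriv_zero]
      simp only [hv1, hB]; simp
    · rw [iterStep isOpen_univ v0 v1 g01 1 (Set.mem_univ 0),
        iterStep isOpen_univ v1 v2 g12 0 (Set.mem_univ 0), iteratedDeriv_zero]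
      simp only [hv2, hC2]; simp
    · rw [iterStep isOpen_univ v0 v1 g01 2 (Set.mem_univ 0),
        iterStep isOpen_univ v1 v2 g12 1 (Set.mem_univ 0),
        iterStep isOpen_univ v2 v3 g23 0 (Set.mem_univ 0), iteratedDeriv_zero]
      simp only [hv3, hC3]; simp
  have hv0cd : ContDiffOn ℝ ((3:ℕ)+1) v0 (Set.univ : Set ℝ) := by
    have h1 : ContDiff ℝ ((4:ℕ) : WithTop ℕ∞) (fun h : ℝ => f (y₀ + h)) := by
      have := (hf.of_le (WithTop.coe_le_coe.2 le_top : ((4:ℕ) : WithTop ℕ∞) ≤ ((⊤ : ℕ∞) : WithTop ℕ∞))).comp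
        ((contDiff_const.add contDiff_id) : ContDiff ℝ ((4:ℕ) : WithTop ℕ∞) (fun h : ℝ => y₀ + h))
      exact this
    have h2 : ContDiff ℝ ((4:ℕ) : WithTop ℕ∞) (fun h : ℝ => A + B*h + C2/2*h^2 + C3/6*h^3) := by
      fun_prop (disch := norm_num)
    rw [hv0]
    exact_mod_cast (h1.sub h2).contDiffOn
  have Tfact : v0 =O[𝓝 (0:ℝ)] fun h => h^4 :=
    auxH 3 v0 Set.univ isOpen_univ (Set.mem_univ 0) hv0cd hvanT
    -- asymptotic machinery on the right-neighbourhood filter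
  set L := 𝓝[>] (0:ℝ) with hLdef
  have hL : L ≤ 𝓝 (0:ℝ) := nhdsWithin_le_nhds
  have ht1 : (fun t : ℝ => t) =O[L] fun _ => (1:ℝ) :=
    ((continuous_id.tendsto (0:ℝ)).mono_left hL).isBigO_one ℝ
  have hpow1 : ∀ m : ℕ, (fun t : ℝ => t^m) =O[L] fun _ => (1:ℝ) := fun m =>
    (((continuous_pow m).tendsto (0:ℝ)).mono_left hL).isBigO_one ℝ
  have h51 : (fun t : ℝ => t^5) =O[L] fun t => t :=
    ((isBigO_refl (fun t : ℝ => t) L).mul (hpow1 4)).congr (fun t => by ring) (fun t => by ring)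
  set Pf : ℝ → ℝ := fun h => A + B*h + C2/2*h^2 + C3/6*h^3 with hPf
  set c2f : ℝ → ℝ := fun t => t*A + t^2*(A*B)/2 + t^3*(A^2*C2)/8 + t^4*(A^3*C3)/48 with hc2f
  set c3f : ℝ → ℝ := fun t => t*A + t^2*(A*B)/2 + t^3*(A*B^2)/4 + t^3*(A^2*C2)/8
      + t^4*(A^2*B*C2)*(3/16) + t^4*(A^3*C3)/48 with hc3f
  set c4f : ℝ → ℝ := fun t => t*A + t^2*(A*B) + t^3*(A*B^2)/2 + t^3*(A^2*C2)/2
      + t^4*(A*B^3)/4 + t^4*(A^2*B*C2)*(5/8) + t^4*(A^3*C3)/6 with hc4f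
  set G3f : ℝ → ℝ := fun t => (1/32 : ℝ)*A^2*B^2*C2 + (1/32 : ℝ)*A^3*C2^2 + (1/24 : ℝ)*A^3*B*C3 + (1/64 : ℝ)*t*A^3*B*C2^2 + (1/64 : ℝ)*t*A^3*B^2*C3 + (5/384 : ℝ)*t*A^4*C2*C3 + (1/384 : ℝ)*t^2*A^3*B^3*C3 + (1/512 : ℝ)*t^2*A^4*C2^3 + (1/96 : ℝ)*t^2*A^4*B*C2*C3 + (1/768 : ℝ)*t^2*A^5*C3^2 + (1/512 : ℝ)*t^3*A^4*B^2*C2*C3 + (5/3072 : ℝ)*t^3*A^5*C2^2*C3 + (1/768 : ℝ)*t^3*A^5*B*C3^2 + (1/2048 : ℝ)*t^4*A^5*B*C2^2*C3 + (1/3072 : ℝ)*t^4*A^5*B^2*C3^2 + (7/18432 : ℝ)*t^4*A^6*C2*C3^2 + (1/24576 : ℝ)*t^5*A^6*C2^3*C3 + (1/6144 : ℝ)*t^5*A^6*B*C2*C3^2 + (1/36864 : ℝ)*t^5*A^7*C3^3 + (1/49152 : ℝ)*t^6*A^7*C2^2*C3^2 + (1/73728 : ℝ)*t^6*A^7*B*C3^3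 + (1/294912 : ℝ)*t^7*A^8*C2*C3^3 + (1/5308416 : ℝ)*t^8*A^9*C3^4 with hG3f
  set G4f : ℝ → ℝ := fun t => (9/16 : ℝ)*A^2*B^2*C2 + (1/8 : ℝ)*A^3*C2^2 + (13/48 : ℝ)*A^3*B*C3 + (1/8 : ℝ)*t*A^2*B^3*C2 + (1/4 : ℝ)*t*A^3*B*C2^2 + (1/4 : ℝ)*t*A^3*B^2*C3 + (1/12 : ℝ)*t*A^4*C2*C3 + (1/32 : ℝ)*t^2*A^2*B^4*C2 + (1/8 : ℝ)*t^2*A^3*B^2*C2^2 + (7/48 : ℝ)*t^2*A^3*B^3*C3 + (1/128 : ℝ)*t^2*A^4*C2^3 + (1/6 : ℝ)*t^2*A^4*B*C2*C3 + (1/96 : ℝ)*t^2*A^5*C3^2 + (3/64 : ℝ)*t^3*A^3*B^3*C2^2 + (1/16 : ℝ)*t^3*A^3*B^4*C3 + (3/128 : ℝ)*t^3*A^4*B*C2^3 + (7/48 : ℝ)*t^3*A^4*B^2*C2*C3 + (1/96 : ℝ)*t^3*A^5*C2^2*C3 + (1/96 : ℝ)*t^3*A^5*B*C3^2 + (1/64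 : ℝ)*t^4*A^3*B^5*C3 + (9/512 : ℝ)*t^4*A^4*B^2*C2^3 + (11/128 : ℝ)*t^4*A^4*B^3*C2*C3 + (1/32 : ℝ)*t^4*A^5*B*C2^2*C3 + (1/128 : ℝ)*t^4*A^5*B^2*C3^2 + (13/4608 : ℝ)*t^4*A^6*C2*C3^2 + (1/384 : ℝ)*t^5*A^3*B^6*C3 + (7/256 : ℝ)*t^5*A^4*B^4*C2*C3 + (1/32 : ℝ)*t^5*A^5*B^2*C2^2*C3 + (1/384 : ℝ)*t^5*A^5*B^3*C3^2 + (1/3072 : ℝ)*t^5*A^6*C2^3*C3 + (1/192 : ℝ)*t^5*A^6*B*C2*C3^2 + (1/4608 : ℝ)*t^5*A^7*C3^3 + (3/512 : ℝ)*t^6*A^4*B^5*C2*C3 + (15/1024 : ℝ)*t^6*A^5*B^3*C2^2*C3 + (1/1536 : ℝ)*t^6*A^5*B^4*C3^2 + (3/2048 : ℝ)*t^6*A^6*B*C2^3*C3 + (1/384 : ℝ)*t^6*A^6*B^2*C2*C3^2 + (1/6144 : ℝ)*t^6*A^7*C2^2*C3^2 + (1/9216 : ℝ)*t^6*A^7*B*C3^3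 + (9/2048 : ℝ)*t^7*A^5*B^4*C2^2*C3 + (9/4096 : ℝ)*t^7*A^6*B^2*C2^3*C3 + (1/1024 : ℝ)*t^7*A^6*B^3*C2*C3^2 + (1/2048 : ℝ)*t^7*A^7*B*C2^2*C3^2 + (1/18432 : ℝ)*t^7*A^7*B^2*C3^3 + (1/36864 : ℝ)*t^7*A^8*C2*C3^3 + (9/8192 : ℝ)*t^8*A^6*B^3*C2^3*C3 + (3/8192 : ℝ)*t^8*A^7*B^2*C2^2*C3^2 + (1/24576 : ℝ)*t^8*A^8*B*C2*C3^3 + (1/663552 : ℝ)*t^8*A^9*C3^4 with hG4f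
  have E2 : ∀ t : ℝ, t * Pf (t*A/2) = c2f t := by
    intro t; simp only [hPf, hc2f]; ring
  have E3 : ∀ t : ℝ, t * Pf (c2f t / 2) = c3f t + t^5 * G3f t := by
    intro t; simp only [hPf, hc2f, hc3f, hG3f]; ring
  have E4 : ∀ t : ℝ, t * Pf (c3f t) = c4f t + t^5 * G4f t := by
    intro t; simp only [hPf, hc3f, hc4f, hG4f]; ring
  have Efin : ∀ t : ℝ, y₀ + (t*A + 2*c2f t + 2*c3f t + c4f t)/6
      = y₀ + A*t + a2*t^2/2 + a3*t^3/6 + a4*t^4/24 := by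
    intro t; simp only [hc2f, hc3f, hc4f, ha2, ha3, ha4]; ring
  have htc2 : Filter.Tendsto c2f L (𝓝 0) := by
    have hc : Continuous c2f := by rw [hc2f]; fun_prop (disch := norm_num)
    exact (hc.tendsto' 0 0 (by simp only [hc2f]; norm_num)).mono_left hL
  have htc3 : Filter.Tendsto c3f L (𝓝 0) := by
    have hc : Continuous c3f := by rw [hc3f]; fun_prop (disch := norm_num)
    exact (hc.tendsto' 0 0 (by simp only [hc3f]; norm_num)).mono_left hL
  have hc2O : c2f =O[L] fun t => t := by
    have hu : Filter.Tendsto (fun t : ℝ => A + t*(A*B)/2 + t^2*(A^2*C2)/8 + t^3*(A^3*C3)/48) L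
        (𝓝 (A + 0*(A*B)/2 + 0^2*(A^2*C2)/8 + 0^3*(A^3*C3)/48)) :=
      ((Continuous.tendsto (by fun_prop (disch := norm_num)) 0)).mono_left hL
    refine ((isBigO_refl (fun t : ℝ => t) L).mul (hu.isBigO_one ℝ)).congr
      (fun t => ?_) (fun t => by ring)
    simp only [hc2f]; ring
  have hc3O : c3f =O[L] fun t => t := by
    have hu : Filter.Tendsto (fun t : ℝ => A + t*(A*B)/2 + t^2*(A*B^2)/4 + t^2*(A^2*C2)/8
        + t^3*(A^2*B*C2)*(3/16) + t^3*(A^3*C3)/48) L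
        (𝓝 (A + 0*(A*B)/2 + 0^2*(A*B^2)/4 + 0^2*(A^2*C2)/8
        + 0^3*(A^2*B*C2)*(3/16) + 0^3*(A^3*C3)/48)) :=
      ((Continuous.tendsto (by fun_prop (disch := norm_num)) 0)).mono_left hL
    refine ((isBigO_refl (fun t : ℝ => t) L).mul (hu.isBigO_one ℝ)).congr
      (fun t => ?_) (fun t => by ring)
    simp only [hc3f]; ring
  -- stage 2
  have hk2' : ∀ t : ℝ, k₂ t = t * f (y₀ + t*A/2) := by
    intro t; rw [hk₂ t, hk₁ t]
  have htA2 : Filter.Tendsto (fun t : ℝ => t*A/2) L (𝓝 0) := by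
    have hc : Continuous (fun t : ℝ => t*A/2) := by fun_prop (disch := norm_num)
    exact (hc.tendsto' 0 0 (by norm_num)).mono_left hL
  have hcomp2 : (fun t : ℝ => f (y₀ + t*A/2) - Pf (t*A/2)) =O[L] fun t => (t*A/2)^4 := by
    refine (Tfact.comp_tendsto htA2).congr (fun t => ?_) (fun t => rfl)
    simp only [Function.comp_apply, hv0, hPf]
  have h4A : (fun t : ℝ => (t*A/2)^4) =O[L] fun t => t^4 :=
    ((isBigO_refl (fun t : ℝ => t^4) L).const_mul_left ((A/2)^4)).congr
      (fun t => by ring) (fun t => rfl)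
  have O2 : (fun t : ℝ => k₂ t - c2f t) =O[L] fun t => t^5 := by
    have hmul := (isBigO_refl (fun t : ℝ => t) L).mul (hcomp2.trans h4A)
    refine hmul.congr (fun t => ?_) (fun t => by ring)
    rw [hk2' t]
    linear_combination (-1 : ℝ) * E2 t
  have htk2 : Filter.Tendsto k₂ L (𝓝 0) := by
    have hcy : Continuous (fun t : ℝ => y₀ + t*A/2) := by fun_prop (disch := norm_num)
    have hc : Continuous (fun t : ℝ => t * f (y₀ + t*A/2)) :=
      continuous_id.mul (hf.continuous.comp hcy)
    have h0 := (hc.tendsto' 0 0 (by norm_num)).mono_left hL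
    exact Filter.Tendsto.congr (fun t => (hk2' t).symm) h0
  have Ok2 : k₂ =O[L] fun t => t :=
    (hc2O.add (O2.trans h51)).congr (fun t => by ring) (fun t => rfl)
  -- stage 3
  have htk2h : Filter.Tendsto (fun t : ℝ => k₂ t / 2) L (𝓝 0) := by
    simpa using htk2.div_const 2
  have hcomp3 : (fun t : ℝ => f (y₀ + k₂ t/2) - Pf (k₂ t/2)) =O[L] fun t => (k₂ t/2)^4 := by
    refine (Tfact.comp_tendsto htk2h).congr (fun t => ?_) (fun t => rfl)
    simp only [Function.comp_apply, hv0, hPf]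
  have hk2h4 : (fun t : ℝ => (k₂ t/2)^4) =O[L] fun t => t^4 := by
    have h : (fun t : ℝ => k₂ t/2) =O[L] fun t => t :=
      (Ok2.const_mul_left (1/2)).congr (fun t => by ring) (fun t => rfl)
    exact h.pow 4
  have term31 : (fun t : ℝ => t * (f (y₀ + k₂ t/2) - Pf (k₂ t/2))) =O[L] fun t => t^5 :=
    ((isBigO_refl (fun t : ℝ => t) L).mul (hcomp3.trans hk2h4)).congr
      (fun t => rfl) (fun t => by ring)
  have hd23 : (fun t : ℝ => (k₂ t - c2f t)/2) =O[L] fun t => t^5 :=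
    (O2.const_mul_left (1/2)).congr (fun t => by ring) (fun t => rfl)
  have hS3 := ((tendsto_const_nhds (x := B) (f := L)).add
      (((htk2.div_const 2).add (htc2.div_const 2)).const_mul (C2/2))).add
      (((((htk2.div_const 2).pow 2).add ((htk2.div_const 2).mul (htc2.div_const 2))).add
        ((htc2.div_const 2).pow 2)).const_mul (C3/6))
  have term32 : (fun t : ℝ => t * (Pf (k₂ t/2) - Pf (c2f t/2))) =O[L] fun t => t^5 := by
    have h := (ht1.mul hd23).mul (hS3.isBigO_one ℝ)
    refine h.congr (fun t => ?_) (fun t => by ring)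
    simp only [hPf]; ring
  have O3 : (fun t : ℝ => k₃ t - c3f t) =O[L] fun t => t^5 := by
    have htG3 : Filter.Tendsto G3f L (𝓝 (G3f 0)) :=
      ((Continuous.tendsto (by rw [hG3f]; fun_prop (disch := norm_num)) 0)).mono_left hL
    have term33 : (fun t : ℝ => t^5 * G3f t) =O[L] fun t => t^5 :=
      ((isBigO_refl (fun t : ℝ => t^5) L).mul (htG3.isBigO_one ℝ)).congr
        (fun t => rfl) (fun t => by ring)
    have h := (term31.add term32).add term33
    refine h.congr (fun t => ?_) (fun t => by ring)
    rw [hk₃ t]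
    linear_combination (-1 : ℝ) * E3 t
  have htk3 : Filter.Tendsto k₃ L (𝓝 0) := by
    have hb : Filter.Tendsto (fun t : ℝ => y₀ + k₂ t/2) L (𝓝 (y₀ + 0)) :=
      tendsto_const_nhds.add htk2h
    have hfb := (hf.continuous.tendsto (y₀ + 0)).comp hb
    have hid : Filter.Tendsto (fun t : ℝ => t) L (𝓝 0) :=
      (continuous_id.tendsto 0).mono_left hL
    have h := hid.mul hfb
    rw [zero_mul] at h
    exact Filter.Tendsto.congr (fun t => (hk₃ t).symm) h
  have Ok3 : k₃ =O[L] fun t => t :=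
    (hc3O.add (O3.trans h51)).congr (fun t => by ring) (fun t => rfl)
  -- stage 4
  have hcomp4 : (fun t : ℝ => f (y₀ + k₃ t) - Pf (k₃ t)) =O[L] fun t => (k₃ t)^4 := by
    refine (Tfact.comp_tendsto htk3).congr (fun t => ?_) (fun t => rfl)
    simp only [Function.comp_apply, hv0, hPf]
  have term41 : (fun t : ℝ => t * (f (y₀ + k₃ t) - Pf (k₃ t))) =O[L] fun t => t^5 :=
    ((isBigO_refl (fun t : ℝ => t) L).mul (hcomp4.trans (Ok3.pow 4))).congr
      (fun t => rfl) (fun t => by ring)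
  have hS4 := ((tendsto_const_nhds (x := B) (f := L)).add
      ((htk3.add htc3).const_mul (C2/2))).add
      ((((htk3.pow 2).add (htk3.mul htc3)).add (htc3.pow 2)).const_mul (C3/6))
  have term42 : (fun t : ℝ => t * (Pf (k₃ t) - Pf (c3f t))) =O[L] fun t => t^5 := by
    have h := (ht1.mul O3).mul (hS4.isBigO_one ℝ)
    refine h.congr (fun t => ?_) (fun t => by ring)
    simp only [hPf]; ring
  have O4 : (fun t : ℝ => k₄ t - c4f t) =O[L] fun t => t^5 := by
    have htG4 : Filter.Tendsto G4f L (𝓝 (G4f 0)) :=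
      ((Continuous.tendsto (by rw [hG4f]; fun_prop (disch := norm_num)) 0)).mono_left hL
    have term43 : (fun t : ℝ => t^5 * G4f t) =O[L] fun t => t^5 :=
      ((isBigO_refl (fun t : ℝ => t^5) L).mul (htG4.isBigO_one ℝ)).congr
        (fun t => rfl) (fun t => by ring)
    have h := (term41.add term42).add term43
    refine h.congr (fun t => ?_) (fun t => by ring)
    rw [hk₄ t]
    linear_combination (-1 : ℝ) * E4 t
  -- final assembly
  have hyO' : (fun t : ℝ => y t - (y₀ + A*t + a2*t^2/2 + a3*t^3/6 + a4*t^4/24)) =O[L]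
      fun t => t^5 :=
    (hyO.mono hL).congr (fun t => by simp only [hw0]) (fun t => rfl)
  have hmain := ((((O2.const_mul_left 2).add (O3.const_mul_left 2)).add O4).const_mul_left
      (1/6)).sub hyO'
  refine hmain.congr (fun t => ?_) (fun t => rfl)
  rw [hk₁ t]
  linear_combination (-1 : ℝ) * Efin t
end

section
/- Let f : ℝ → ℝ be smooth (C^∞) and y₀ ∈ ℝ; write f_n = f(y₀) and similarly for derivatives. For Δt > 0 define the classical RK4 stages k₁, k₂, k₃, k₄. Then as Δt → 0⁺ the elementary differentials can be recovered from the stages up to O(Δt⁴): k₁ = Δt f_n; −3k₁ + 2k₂ + 2k₃ − k₄ = Δt² f_n f_n' + O(Δt⁴); 4k₁ − 8k₃ + 4k₄ = Δt³ f_n² f_n'' + O(Δt⁴); −4k₂ + 4k₃ = Δt³ f_n (f_n')² + O(Δt⁴). -/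
open scoped Topology
open Filter Asymptotics Set

private lemma iterWithinIcc {g : ℝ → ℝ} (hg : ContDiff ℝ (⊤ : ℕ∞) g) (m : ℕ) {x : ℝ}
    (hx : x ∈ Icc (0:ℝ) 1) :
    iteratedDerivWithin m g (Icc 0 1) x = iteratedDeriv m g x := by
  rw [iteratedDerivWithin_eq_iteratedFDerivWithin, iteratedDeriv_eq_iteratedFDeriv]
  have h1 := ((hg.contDiffOn (s := univ)).ftaylorSeriesWithin uniqueDiffOn_univ).mono
    (subset_univ (Icc (0:ℝ) 1))
  have h2 := h1.eq_iteratedFDerivWithin_of_uniqueDiffOn (m := m) (by exact_mod_cast le_top)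
    (uniqueDiffOn_Icc one_pos) hx
  rw [← h2]
  simp [ftaylorSeriesWithin, iteratedFDerivWithin_univ]

private lemma powO {m n : ℕ} (h : m ≤ n) :
    (fun t : ℝ => t ^ n) =O[𝓝[>] (0:ℝ)] fun t => t ^ m := by
  rw [isBigO_iff]
  refine ⟨1, ?_⟩
  filter_upwards [Ioc_mem_nhdsGT (zero_lt_one : (0:ℝ) < 1)] with t ht
  rw [Real.norm_eq_abs, Real.norm_eq_abs, one_mul,
    abs_of_nonneg (pow_nonneg ht.1.le _), abs_of_nonneg (pow_nonneg ht.1.le _)]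
  exact pow_le_pow_of_le_one ht.1.le ht.2 h

private lemma taylor4 {g : ℝ → ℝ} (hg : ContDiff ℝ (⊤ : ℕ∞) g) :
    (fun t : ℝ => g t - (g 0 + deriv g 0 * t + iteratedDeriv 2 g 0 / 2 * t ^ 2 +
        iteratedDeriv 3 g 0 / 6 * t ^ 3)) =O[𝓝 (0:ℝ)] fun t => t ^ 4 := by
  have hmem : (0:ℝ) ∈ Icc (0:ℝ) 1 := left_mem_Icc.mpr zero_le_one
  have htay : ∀ (φ : ℝ → ℝ), ContDiff ℝ (⊤ : ℕ∞) φ → ∀ x : ℝ,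
      taylorWithinEval φ 3 (Icc 0 1) 0 x = φ 0 + deriv φ 0 * x +
        iteratedDeriv 2 φ 0 / 2 * x ^ 2 + iteratedDeriv 3 φ 0 / 6 * x ^ 3 := by
    intro φ hφ x
    rw [taylor_within_apply]
    rw [show (3:ℕ)+1 = 4 from rfl, Finset.sum_range_succ, Finset.sum_range_succ,
      Finset.sum_range_succ, Finset.sum_range_one,
      iterWithinIcc hφ 0 hmem, iterWithinIcc hφ 1 hmem,
      iterWithinIcc hφ 2 hmem, iterWithinIcc hφ 3 hmem]
    simp [iteratedDeriv_one, Nat.factorial]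
    ring
  obtain ⟨C₁, hC₁⟩ := exists_taylor_mean_remainder_bound (n := 3) zero_le_one
    (hg.contDiffOn.of_le (by rw [← WithTop.coe_natCast]; exact WithTop.coe_le_coe.mpr le_top))
  have hR : ∀ x ∈ Icc (0:ℝ) 1, |g x - (g 0 + deriv g 0 * x +
      iteratedDeriv 2 g 0 / 2 * x ^ 2 + iteratedDeriv 3 g 0 / 6 * x ^ 3)| ≤ C₁ * x ^ 4 := by
    intro x hx
    have h := hC₁ x hx
    rw [htay g hg x] at h
    simpa [Real.norm_eq_abs] using h
  have hGc : ContDiff ℝ (⊤ : ℕ∞) (fun u : ℝ => g (-u)) := hg.comp contDiff_neg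
  obtain ⟨C₂, hC₂⟩ := exists_taylor_mean_remainder_bound (n := 3) zero_le_one
    (hGc.contDiffOn.of_le (by rw [← WithTop.coe_natCast]; exact WithTop.coe_le_coe.mpr le_top))
  have d1 : deriv (fun u : ℝ => g (-u)) 0 = -deriv g 0 := by
    have h := iteratedDeriv_comp_neg 1 g 0
    simpa [iteratedDeriv_one] using h
  have d2 : iteratedDeriv 2 (fun u : ℝ => g (-u)) 0 = iteratedDeriv 2 g 0 := by
    simpa using iteratedDeriv_comp_neg 2 g 0
  have d3 : iteratedDeriv 3 (fun u : ℝ => g (-u)) 0 = -iteratedDeriv 3 g 0 := by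
    have h := iteratedDeriv_comp_neg 3 g 0
    rw [h]; norm_num
  have hL : ∀ t ∈ Icc (-1:ℝ) 0, |g t - (g 0 + deriv g 0 * t +
      iteratedDeriv 2 g 0 / 2 * t ^ 2 + iteratedDeriv 3 g 0 / 6 * t ^ 3)| ≤ C₂ * t ^ 4 := by
    intro t ht
    have hu : -t ∈ Icc (0:ℝ) 1 := ⟨neg_nonneg.mpr ht.2, by linarith [ht.1]⟩
    have h := hC₂ (-t) hu
    rw [htay _ hGc (-t), d1, d2, d3, Real.norm_eq_abs] at h
    have e : g (- -t) - (g (-0) + -deriv g 0 * -t + iteratedDeriv 2 g 0 / 2 * (-t) ^ 2 +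
        -iteratedDeriv 3 g 0 / 6 * (-t) ^ 3) = g t - (g 0 + deriv g 0 * t +
        iteratedDeriv 2 g 0 / 2 * t ^ 2 + iteratedDeriv 3 g 0 / 6 * t ^ 3) := by
      rw [neg_neg, neg_zero]; ring
    rw [e] at h
    have e2 : C₂ * (-t - 0) ^ (3+1) = C₂ * t ^ 4 := by ring
    rw [e2] at h
    exact h
  rw [isBigO_iff]
  refine ⟨max C₁ C₂, ?_⟩
  filter_upwards [Ioo_mem_nhds (by norm_num : (-1:ℝ) < 0) (by norm_num : (0:ℝ) < 1)] with t ht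
  have h4 : (0:ℝ) ≤ t ^ 4 := by positivity
  rw [Real.norm_eq_abs, Real.norm_eq_abs, abs_of_nonneg h4]
  rcases le_or_gt 0 t with h | h
  · exact (hR t ⟨h, ht.2.le⟩).trans (by nlinarith [le_max_left C₁ C₂])
  · exact (hL t ⟨ht.1.le, h.le⟩).trans (by nlinarith [le_max_right C₁ C₂])

private lemma stage {g r h : ℝ → ℝ} {A B C D a b c : ℝ}
    (hg : ∀ x, g x = A + B*x + C/2*x^2 + D/6*x^3 + r x)
    (hr : r =O[𝓝 (0:ℝ)] fun x => x ^ 4)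
    (hh : (fun t => h t - (a*t + b*t^2 + c*t^3)) =O[𝓝[>](0:ℝ)] fun t => t ^ 4) :
    (fun t => t * g (h t) - (A*t + B*a*t^2 + (B*b + C/2*a^2)*t^3))
      =O[𝓝[>](0:ℝ)] fun t => t ^ 4 := by
  have e54 : (fun t : ℝ => t * t ^ 4) = fun t : ℝ => t ^ 5 := funext fun t => by ring
  have tO : (fun t : ℝ => t) =O[𝓝[>](0:ℝ)] fun t : ℝ => t := isBigO_refl _ _
  have pw : ∀ n : ℕ, 1 ≤ n → (fun t : ℝ => t ^ n) =O[𝓝[>](0:ℝ)] fun t : ℝ => t := by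
    intro n hn
    have := powO (m := 1) hn
    simpa [pow_one] using this
  have hp : (fun t : ℝ => a*t + b*t^2 + c*t^3) =O[𝓝[>](0:ℝ)] fun t => t :=
    ((tO.const_mul_left a).add ((pw 2 (by norm_num)).const_mul_left b)).add
      ((pw 3 (by norm_num)).const_mul_left c)
  have hq : (fun t : ℝ => b*t^2 + c*t^3) =O[𝓝[>](0:ℝ)] fun t => t ^ 2 := by
    have h2 := (powO (le_refl 2)).const_mul_left b
    have h3 := (powO (by norm_num : 2 ≤ 3)).const_mul_left c
    exact h2.add h3
  have hO : h =O[𝓝[>](0:ℝ)] fun t => t := by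
    have := (hh.trans (pw 4 (by norm_num))).add hp
    have e : (fun t => (h t - (a*t + b*t^2 + c*t^3)) + (a*t + b*t^2 + c*t^3)) = h :=
      funext fun t => by ring
    rwa [e] at this
  have h2' : (fun t => h t - a*t) =O[𝓝[>](0:ℝ)] fun t => t ^ 2 := by
    have := (hh.trans (powO (by norm_num : 2 ≤ 4))).add hq
    have e : (fun t => (h t - (a*t + b*t^2 + c*t^3)) + (b*t^2 + c*t^3)) =
        fun t => h t - a*t := funext fun t => by ring
    rwa [e] at this
  have h3' : (fun t => h t + a*t) =O[𝓝[>](0:ℝ)] fun t => t :=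
    hO.add (tO.const_mul_left a)
  have htend : Tendsto h (𝓝[>](0:ℝ)) (𝓝 0) := by
    have t4 : Tendsto (fun t : ℝ => t ^ 4) (𝓝[>](0:ℝ)) (𝓝 0) := by
      have : Tendsto (fun t : ℝ => t ^ 4) (𝓝 (0:ℝ)) (𝓝 ((0:ℝ)^4)) :=
        (continuous_pow 4).tendsto 0
      simpa using this.mono_left nhdsWithin_le_nhds
    have hhp : Tendsto (fun t : ℝ => a*t + b*t^2 + c*t^3) (𝓝[>](0:ℝ)) (𝓝 0) := by
      have hc : Continuous (fun t : ℝ => a*t + b*t^2 + c*t^3) := by continuity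
      have h0 : Tendsto (fun t : ℝ => a*t + b*t^2 + c*t^3) (𝓝[>](0:ℝ))
          (𝓝 (a*0+b*0^2+c*0^3)) := (hc.tendsto 0).mono_left nhdsWithin_le_nhds
      simpa using h0
    have hd := hh.trans_tendsto t4
    have := hd.add hhp
    simpa using this
  have hrh : (fun t => r (h t)) =O[𝓝[>](0:ℝ)] fun t => t ^ 4 :=
    (hr.comp_tendsto htend).trans (hO.pow 4)
  have key : (fun t => t * g (h t) - (A*t + B*a*t^2 + (B*b + C/2*a^2)*t^3))
      = fun t => B*(t*(h t - (a*t + b*t^2 + c*t^3))) + B*c*t^4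
        + C/2*(t*((h t - a*t)*(h t + a*t))) + D/6*(t*(h t)^3) + t * r (h t) := by
    funext t; rw [hg (h t)]; ring
  rw [key]
  have idO : (fun t : ℝ => t) =O[𝓝[>](0:ℝ)] fun t : ℝ => t := isBigO_refl _ _
  have m1 : (fun t => t*(h t - (a*t + b*t^2 + c*t^3))) =O[𝓝[>](0:ℝ)] fun t => t ^ 4 := by
    have := idO.mul hh
    rw [e54] at this
    exact this.trans (powO (by norm_num))
  have m2 : (fun t => t*((h t - a*t)*(h t + a*t))) =O[𝓝[>](0:ℝ)] fun t => t ^ 4 := by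
    have := idO.mul (h2'.mul h3')
    have e : (fun t : ℝ => t * (t ^ 2 * t)) = fun t : ℝ => t ^ 4 :=
      funext fun t => by ring
    rwa [e] at this
  have m3 : (fun t => t*(h t)^3) =O[𝓝[>](0:ℝ)] fun t => t ^ 4 := by
    have := idO.mul (hO.pow 3)
    have e : (fun t : ℝ => t * t ^ 3) = fun t : ℝ => t ^ 4 :=
      funext fun t => by ring
    rwa [e] at this
  have m4 : (fun t => t * r (h t)) =O[𝓝[>](0:ℝ)] fun t => t ^ 4 := by
    have := idO.mul hrh
    rw [e54] at this
    exact this.trans (powO (by norm_num))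
  have m5 : (fun t : ℝ => B*c*t^4) =O[𝓝[>](0:ℝ)] fun t => t ^ 4 :=
    (isBigO_refl (fun t : ℝ => t ^ 4) _).const_mul_left (B*c)
  exact ((((m1.const_mul_left B).add m5).add (m2.const_mul_left (C/2))).add
    (m3.const_mul_left (D/6))).add m4

theorem stmt_11 (f : ℝ → ℝ) (hf : ContDiff ℝ (⊤ : ℕ∞) f) (y₀ : ℝ)
    (k₁ k₂ k₃ k₄ : ℝ → ℝ)
    (hk₁ : ∀ Δt : ℝ, k₁ Δt = Δt * f y₀)
    (hk₂ : ∀ Δt : ℝ, k₂ Δt = Δt * f (y₀ + k₁ Δt / 2))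
    (hk₃ : ∀ Δt : ℝ, k₃ Δt = Δt * f (y₀ + k₂ Δt / 2))
    (hk₄ : ∀ Δt : ℝ, k₄ Δt = Δt * f (y₀ + k₃ Δt)) :
    (∀ Δt : ℝ, k₁ Δt = Δt * f y₀) ∧
    ((fun Δt : ℝ => (-3 * k₁ Δt + 2 * k₂ Δt + 2 * k₃ Δt - k₄ Δt) -
        Δt ^ 2 * (f y₀ * deriv f y₀))
      =O[𝓝[>] (0 : ℝ)] fun Δt : ℝ => Δt ^ 4) ∧
    ((fun Δt : ℝ => (4 * k₁ Δt - 8 * k₃ Δt + 4 * k₄ Δt) -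
        Δt ^ 3 * ((f y₀) ^ 2 * iteratedDeriv 2 f y₀))
      =O[𝓝[>] (0 : ℝ)] fun Δt : ℝ => Δt ^ 4) ∧
    ((fun Δt : ℝ => (-4 * k₂ Δt + 4 * k₃ Δt) -
        Δt ^ 3 * (f y₀ * (deriv f y₀) ^ 2))
      =O[𝓝[>] (0 : ℝ)] fun Δt : ℝ => Δt ^ 4) := by
  set A := f y₀ with hA
  set B := deriv f y₀ with hB
  set C := iteratedDeriv 2 f y₀ with hC
  set D := iteratedDeriv 3 f y₀ with hD
  set g : ℝ → ℝ := fun x => f (y₀ + x) with hgdef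
  set r : ℝ → ℝ := fun x => g x - (A + B*x + C/2*x^2 + D/6*x^3) with hrdef
  have hg : ∀ x, g x = A + B*x + C/2*x^2 + D/6*x^3 + r x := fun x => by
    rw [hrdef]; ring
  have hgc : ContDiff ℝ (⊤ : ℕ∞) g := hf.comp (contDiff_const.add contDiff_id)
  have e0 : g 0 = A := by simp [hgdef, hA]
  have e1 : deriv g 0 = B := by
    have h := congrFun (iteratedDeriv_comp_const_add 1 f y₀) 0
    simpa [hgdef, hB, iteratedDeriv_one] using h
  have e2 : iteratedDeriv 2 g 0 = C := by
    have h := congrFun (iteratedDeriv_comp_const_add 2 f y₀) 0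
    simpa [hgdef, hC] using h
  have e3 : iteratedDeriv 3 g 0 = D := by
    have h := congrFun (iteratedDeriv_comp_const_add 3 f y₀) 0
    simpa [hgdef, hD] using h
  have hr : r =O[𝓝 (0:ℝ)] fun x => x ^ 4 := by
    have T := taylor4 hgc
    rw [e0, e1, e2, e3] at T
    exact T
  have hh₁ : (fun t => k₁ t / 2 - ((A/2)*t + 0*t^2 + 0*t^3)) =O[𝓝[>](0:ℝ)]
      fun t => t ^ 4 := by
    have e : (fun t => k₁ t / 2 - ((A/2)*t + 0*t^2 + 0*t^3)) = fun _ => (0:ℝ) :=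
      funext fun t => by rw [hk₁ t]; ring
    rw [e]; exact isBigO_zero _ _
  have S2 := stage hg hr hh₁
  have K2 : (fun t => k₂ t - (A*t + (A*B/2)*t^2 + (A^2*C/8)*t^3)) =O[𝓝[>](0:ℝ)]
      fun t => t ^ 4 := by
    have e : (fun t => k₂ t - (A*t + (A*B/2)*t^2 + (A^2*C/8)*t^3)) =
        fun t => t * g (k₁ t / 2) - (A*t + B*(A/2)*t^2 + (B*0 + C/2*(A/2)^2)*t^3) :=
      funext fun t => by rw [hk₂ t, hgdef]; ring
    rw [e]; exact S2
  have hh₂ : (fun t => k₂ t / 2 - ((A/2)*t + (A*B/4)*t^2 + (A^2*C/16)*t^3)) =O[𝓝[>](0:ℝ)]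
      fun t => t ^ 4 := by
    have h := K2.const_mul_left (1/2)
    have e : (fun t => (1/2) * (k₂ t - (A*t + (A*B/2)*t^2 + (A^2*C/8)*t^3))) =
        fun t => k₂ t / 2 - ((A/2)*t + (A*B/4)*t^2 + (A^2*C/16)*t^3) :=
      funext fun t => by ring
    rwa [e] at h
  have S3 := stage hg hr hh₂
  have K3 : (fun t => k₃ t - (A*t + (A*B/2)*t^2 + (A*B^2/4 + A^2*C/8)*t^3)) =O[𝓝[>](0:ℝ)]
      fun t => t ^ 4 := by
    have e : (fun t => k₃ t - (A*t + (A*B/2)*t^2 + (A*B^2/4 + A^2*C/8)*t^3)) =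
        fun t => t * g (k₂ t / 2) -
          (A*t + B*(A/2)*t^2 + (B*(A*B/4) + C/2*(A/2)^2)*t^3) :=
      funext fun t => by rw [hk₃ t, hgdef]; ring
    rw [e]; exact S3
  have S4 := stage hg hr K3
  have K4 : (fun t => k₄ t - (A*t + (A*B)*t^2 + (A*B^2/2 + A^2*C/2)*t^3)) =O[𝓝[>](0:ℝ)]
      fun t => t ^ 4 := by
    have e : (fun t => k₄ t - (A*t + (A*B)*t^2 + (A*B^2/2 + A^2*C/2)*t^3)) =
        fun t => t * g (k₃ t) -
          (A*t + B*A*t^2 + (B*(A*B/2) + C/2*A^2)*t^3) :=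
      funext fun t => by rw [hk₄ t, hgdef]; ring
    rw [e]; exact S4
  refine ⟨hk₁, ?_, ?_, ?_⟩
  · have e : (fun t : ℝ => (-3 * k₁ t + 2 * k₂ t + 2 * k₃ t - k₄ t) - t ^ 2 * (A * B)) =
        fun t => 2 * (k₂ t - (A*t + (A*B/2)*t^2 + (A^2*C/8)*t^3))
          + 2 * (k₃ t - (A*t + (A*B/2)*t^2 + (A*B^2/4 + A^2*C/8)*t^3))
          - (k₄ t - (A*t + (A*B)*t^2 + (A*B^2/2 + A^2*C/2)*t^3)) :=
      funext fun t => by rw [hk₁ t]; ring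
    rw [e]
    exact ((K2.const_mul_left 2).add (K3.const_mul_left 2)).sub K4
  · have e : (fun t : ℝ => (4 * k₁ t - 8 * k₃ t + 4 * k₄ t) - t ^ 3 * (A ^ 2 * C)) =
        fun t => 4 * (k₄ t - (A*t + (A*B)*t^2 + (A*B^2/2 + A^2*C/2)*t^3))
          - 8 * (k₃ t - (A*t + (A*B/2)*t^2 + (A*B^2/4 + A^2*C/8)*t^3)) :=
      funext fun t => by rw [hk₁ t]; ring
    rw [e]
    exact (K4.const_mul_left 4).sub (K3.const_mul_left 8)
  · have e : (fun t : ℝ => (-4 * k₂ t + 4 * k₃ t) - t ^ 3 * (A * B ^ 2)) =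
        fun t => 4 * (k₃ t - (A*t + (A*B/2)*t^2 + (A*B^2/4 + A^2*C/8)*t^3))
          - 4 * (k₂ t - (A*t + (A*B/2)*t^2 + (A^2*C/8)*t^3)) :=
      funext fun t => by ring
    rw [e]
    exact (K3.const_mul_left 4).sub (K2.const_mul_left 4)
end

section
/- Let f : ℝ → ℝ be smooth (C^∞), y₀ ∈ ℝ, and let y be the solution of y' = f(y), y(0) = y₀ on a neighborhood of 0. For Δt > 0 define the classical RK4 stages k₁, k₂, k₃, k₄ and the cubic interpolant P(χ) = y₀ + χ k₁ + (χ²/2)(−3k₁ + 2k₂ + 2k₃ − k₄) + (2χ³/3)(k₁ − k₂ − k₃ + k₄). Then sup_{χ ∈ [0,1]} |P(χ) − y(χ Δt)| = O(Δt⁴) as Δt → 0⁺; i.e. the run-time cubic interpolant built from the RK4 intermediate stage evaluations is third-order accurate, consistent with a globally fourth-order multirate method. -/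
open scoped Topology
open Filter Asymptotics

section RK4Aux

open Set

lemma rk4aux_iter3 {s : Set ℝ} (hs : UniqueDiffOn ℝ s) {g₀ g₁ g₂ g₃ : ℝ → ℝ}
    (h₀ : ∀ t ∈ s, HasDerivAt g₀ (g₁ t) t)
    (h₁ : ∀ t ∈ s, HasDerivAt g₁ (g₂ t) t)
    (h₂ : ∀ t ∈ s, HasDerivAt g₂ (g₃ t) t) :
    ∀ x ∈ s, iteratedDerivWithin 1 g₀ s x = g₁ x ∧ iteratedDerivWithin 2 g₀ s x = g₂ x ∧
      iteratedDerivWithin 3 g₀ s x = g₃ x := by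
  have E1 : Set.EqOn (iteratedDerivWithin 1 g₀ s) g₁ s := by
    intro t ht
    rw [iteratedDerivWithin_one]
    exact ((h₀ t ht).hasDerivWithinAt).derivWithin (hs t ht)
  have E2 : Set.EqOn (iteratedDerivWithin 2 g₀ s) g₂ s := by
    intro t ht
    rw [show (2:ℕ) = 1 + 1 from rfl, iteratedDerivWithin_succ,
      derivWithin_congr E1 (E1 ht)]
    exact ((h₁ t ht).hasDerivWithinAt).derivWithin (hs t ht)
  have E3 : Set.EqOn (iteratedDerivWithin 3 g₀ s) g₃ s := by
    intro t ht
    rw [show (3:ℕ) = 2 + 1 from rfl, iteratedDerivWithin_succ,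
      derivWithin_congr E2 (E2 ht)]
    exact ((h₂ t ht).hasDerivWithinAt).derivWithin (hs t ht)
  exact fun x hx => ⟨E1 hx, E2 hx, E3 hx⟩

lemma rk4aux_iter2 {s : Set ℝ} (hs : UniqueDiffOn ℝ s) {g₀ g₁ g₂ : ℝ → ℝ}
    (h₀ : ∀ t ∈ s, HasDerivAt g₀ (g₁ t) t)
    (h₁ : ∀ t ∈ s, HasDerivAt g₁ (g₂ t) t) :
    ∀ x ∈ s, iteratedDerivWithin 1 g₀ s x = g₁ x ∧ iteratedDerivWithin 2 g₀ s x = g₂ x := by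
  have E1 : Set.EqOn (iteratedDerivWithin 1 g₀ s) g₁ s := by
    intro t ht
    rw [iteratedDerivWithin_one]
    exact ((h₀ t ht).hasDerivWithinAt).derivWithin (hs t ht)
  have E2 : Set.EqOn (iteratedDerivWithin 2 g₀ s) g₂ s := by
    intro t ht
    rw [show (2:ℕ) = 1 + 1 from rfl, iteratedDerivWithin_succ,
      derivWithin_congr E1 (E1 ht)]
    exact ((h₁ t ht).hasDerivWithinAt).derivWithin (hs t ht)
  exact fun x hx => ⟨E1 hx, E2 hx⟩

lemma rk4aux_taylor3 {g g₁ g₂ g₃ : ℝ → ℝ} {b : ℝ} (hb : 0 < b)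
    (hg : ContDiffOn ℝ 4 g (Set.Icc 0 b))
    (h₀ : ∀ t ∈ Set.Icc (0:ℝ) b, HasDerivAt g (g₁ t) t)
    (h₁ : ∀ t ∈ Set.Icc (0:ℝ) b, HasDerivAt g₁ (g₂ t) t)
    (h₂ : ∀ t ∈ Set.Icc (0:ℝ) b, HasDerivAt g₂ (g₃ t) t) :
    ∃ C : ℝ, ∀ x ∈ Set.Icc (0:ℝ) b,
      |g x - (g 0 + g₁ 0 * x + g₂ 0 * (x^2/2) + g₃ 0 * (x^3/6))| ≤ C * x^4 := by
  have hs : UniqueDiffOn ℝ (Set.Icc (0:ℝ) b) := uniqueDiffOn_Icc hb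
  obtain ⟨C, hC⟩ := exists_taylor_mean_remainder_bound (n := 3) hb.le hg
  refine ⟨C, fun x hx => ?_⟩
  have h0 : (0:ℝ) ∈ Set.Icc (0:ℝ) b := ⟨le_refl _, hb.le⟩
  obtain ⟨e1, e2, e3⟩ := rk4aux_iter3 hs h₀ h₁ h₂ 0 h0
  have ht : taylorWithinEval g 3 (Set.Icc 0 b) 0 x
      = g 0 + g₁ 0 * x + g₂ 0 * (x^2/2) + g₃ 0 * (x^3/6) := by
    rw [taylor_within_apply]
    rw [Finset.sum_range_succ, Finset.sum_range_succ, Finset.sum_range_succ,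
      Finset.sum_range_succ, Finset.sum_range_zero]
    rw [iteratedDerivWithin_zero, e1, e2, e3]
    simp [Nat.factorial]
    ring
  have := hC x hx
  rw [ht] at this
  simpa using this

lemma rk4aux_taylor2 {g g₁ g₂ : ℝ → ℝ}
    (hg : ContDiffOn ℝ 3 g (Set.Icc 0 1))
    (h₀ : ∀ t ∈ Set.Icc (0:ℝ) 1, HasDerivAt g (g₁ t) t)
    (h₁ : ∀ t ∈ Set.Icc (0:ℝ) 1, HasDerivAt g₁ (g₂ t) t) :
    ∃ C : ℝ, ∀ x ∈ Set.Icc (0:ℝ) 1,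
      |g x - (g 0 + g₁ 0 * x + g₂ 0 * (x^2/2))| ≤ C * x^3 := by
  have hb : (0:ℝ) < 1 := one_pos
  have hs : UniqueDiffOn ℝ (Set.Icc (0:ℝ) 1) := uniqueDiffOn_Icc hb
  obtain ⟨C, hC⟩ := exists_taylor_mean_remainder_bound (n := 2) hb.le hg
  refine ⟨C, fun x hx => ?_⟩
  have h0 : (0:ℝ) ∈ Set.Icc (0:ℝ) 1 := ⟨le_refl _, hb.le⟩
  obtain ⟨e1, e2⟩ := rk4aux_iter2 hs h₀ h₁ 0 h0
  have ht : taylorWithinEval g 2 (Set.Icc 0 1) 0 x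
      = g 0 + g₁ 0 * x + g₂ 0 * (x^2/2) := by
    rw [taylor_within_apply]
    rw [Finset.sum_range_succ, Finset.sum_range_succ, Finset.sum_range_succ,
      Finset.sum_range_zero]
    rw [iteratedDerivWithin_zero, e1, e2]
    simp [Nat.factorial]
    ring
  have := hC x hx
  rw [ht] at this
  simpa using this

lemma rk4aux_cubic {f : ℝ → ℝ} (hfd : Differentiable ℝ f)
    (hdfd : Differentiable ℝ (deriv f)) (hf3 : ContDiff ℝ 3 f) (c : ℝ) :
    ∃ C : ℝ, 0 ≤ C ∧ ∀ u : ℝ, |u| ≤ 1 →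
      |f (c + u) - (f c + deriv f c * u + deriv (deriv f) c * (u^2/2))| ≤ C * |u|^3 := by
  have haff : ContDiff ℝ 3 (fun u : ℝ => c + u) := contDiff_const.add contDiff_id
  have haff' : ContDiff ℝ 3 (fun u : ℝ => c - u) := contDiff_const.sub contDiff_id
  obtain ⟨Cp, hCp⟩ := rk4aux_taylor2 (g := fun u => f (c + u))
      (g₁ := fun u => deriv f (c + u)) (g₂ := fun u => deriv (deriv f) (c + u))
      ((hf3.comp haff).contDiffOn)
      (fun t _ => by
        have hc : HasDerivAt (fun u : ℝ => c + u) 1 t := (hasDerivAt_id t).const_add c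
        simpa [Function.comp_def] using HasDerivAt.comp t (hfd (c + t)).hasDerivAt hc)
      (fun t _ => by
        have hc : HasDerivAt (fun u : ℝ => c + u) 1 t := (hasDerivAt_id t).const_add c
        simpa [Function.comp_def] using HasDerivAt.comp t (hdfd (c + t)).hasDerivAt hc)
  obtain ⟨Cm, hCm⟩ := rk4aux_taylor2 (g := fun u => f (c - u))
      (g₁ := fun u => -deriv f (c - u)) (g₂ := fun u => deriv (deriv f) (c - u))
      ((hf3.comp haff').contDiffOn)
      (fun t _ => by
        have hc : HasDerivAt (fun u : ℝ => c - u) (-1) t := (hasDerivAt_id t).const_sub c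
        simpa [Function.comp_def] using HasDerivAt.comp t (hfd (c - t)).hasDerivAt hc)
      (fun t _ => by
        have hc : HasDerivAt (fun u : ℝ => c - u) (-1) t := (hasDerivAt_id t).const_sub c
        have := HasDerivAt.comp t (hdfd (c - t)).hasDerivAt hc
        have h2 : HasDerivAt (fun u : ℝ => deriv f (c - u)) (deriv (deriv f) (c-t) * (-1)) t := this
        have h3 := h2.neg
        simp only [mul_neg, mul_one, neg_neg] at h3
        exact h3)
  refine ⟨max (max Cp Cm) 0, le_max_right _ _, fun u hu => ?_⟩
  rcases le_or_gt 0 u with h | h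
  · have hx : u ∈ Set.Icc (0:ℝ) 1 := ⟨h, by rwa [abs_of_nonneg h] at hu⟩
    have := hCp u hx
    calc |f (c + u) - (f c + deriv f c * u + deriv (deriv f) c * (u^2/2))| ≤ Cp * u^3 := by
            simpa using this
      _ ≤ max (max Cp Cm) 0 * |u|^3 := by
            rw [abs_of_nonneg h]
            have h3 : (0:ℝ) ≤ u^3 := by positivity
            nlinarith [le_max_left (max Cp Cm) 0, le_max_left Cp Cm, le_max_right Cp Cm]
  · have hx : -u ∈ Set.Icc (0:ℝ) 1 := ⟨by linarith, by rwa [abs_of_neg h] at hu⟩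
    have := hCm (-u) hx
    simp only [sub_zero, sub_neg_eq_add] at this
    have heq : f c + -deriv f c * (-u) + deriv (deriv f) c * ((-u)^2/2)
        = f c + deriv f c * u + deriv (deriv f) c * (u^2/2) := by ring
    rw [heq] at this
    calc |f (c + u) - (f c + deriv f c * u + deriv (deriv f) c * (u^2/2))| ≤ Cm * (-u)^3 := this
      _ ≤ max (max Cp Cm) 0 * |u|^3 := by
            rw [abs_of_neg h]
            have h3 : (0:ℝ) ≤ (-u)^3 := by nlinarith
            nlinarith [le_max_left (max Cp Cm) 0, le_max_left Cp Cm, le_max_right Cp Cm]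

lemma rk4aux_polybound (t c0 c1 c2 c3 : ℝ) (h0 : 0 ≤ t) (h1 : t ≤ 1) :
    |c0 + t*c1 + t^2*c2 + t^3*c3| ≤ |c0| + |c1| + |c2| + |c3| := by
  have e1 : |t*c1| ≤ |c1| := by
    rw [abs_mul, abs_of_nonneg h0]
    nlinarith [abs_nonneg c1]
  have e2 : |t^2*c2| ≤ |c2| := by
    rw [abs_mul, abs_of_nonneg (by positivity : (0:ℝ) ≤ t^2)]
    nlinarith [abs_nonneg c2, pow_le_one₀ h0 h1 (n:=2)]
  have e3 : |t^3*c3| ≤ |c3| := by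
    rw [abs_mul, abs_of_nonneg (by positivity : (0:ℝ) ≤ t^3)]
    nlinarith [abs_nonneg c3, pow_le_one₀ h0 h1 (n:=3)]
  calc |c0 + t*c1 + t^2*c2 + t^3*c3| ≤ |c0 + t*c1 + t^2*c2| + |t^3*c3| := abs_add_le _ _
    _ ≤ |c0 + t*c1| + |t^2*c2| + |t^3*c3| := by gcongr; exact abs_add_le _ _
    _ ≤ |c0| + |t*c1| + |t^2*c2| + |t^3*c3| := by gcongr; exact abs_add_le _ _
    _ ≤ |c0| + |c1| + |c2| + |c3| := by gcongr

end RK4Aux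

set_option maxHeartbeats 1000000 in
theorem stmt_12 (f : ℝ → ℝ) (hf : ContDiff ℝ (⊤ : ℕ∞) f) (y₀ : ℝ) (y : ℝ → ℝ)
    (ε : ℝ) (hε : 0 < ε) (hy0 : y 0 = y₀)
    (hy : ∀ t ∈ Set.Ioo (-ε) ε, HasDerivAt y (f (y t)) t)
    (k₁ k₂ k₃ k₄ : ℝ → ℝ)
    (hk₁ : ∀ Δt : ℝ, k₁ Δt = Δt * f y₀)
    (hk₂ : ∀ Δt : ℝ, k₂ Δt = Δt * f (y₀ + k₁ Δt / 2))
    (hk₃ : ∀ Δt : ℝ, k₃ Δt = Δt * f (y₀ + k₂ Δt / 2))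
    (hk₄ : ∀ Δt : ℝ, k₄ Δt = Δt * f (y₀ + k₃ Δt))
    (P : ℝ → ℝ → ℝ)
    (hP : ∀ (Δt χ : ℝ),
      P Δt χ = y₀ + χ * k₁ Δt +
        χ ^ 2 / 2 * (-3 * k₁ Δt + 2 * k₂ Δt + 2 * k₃ Δt - k₄ Δt) +
        2 * χ ^ 3 / 3 * (k₁ Δt - k₂ Δt - k₃ Δt + k₄ Δt)) :
    (fun Δt : ℝ => ⨆ χ : Set.Icc (0 : ℝ) 1, |P Δt χ - y ((χ : ℝ) * Δt)|)
      =O[𝓝[>] (0 : ℝ)] fun Δt : ℝ => Δt ^ 4 := by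
  -- basic smoothness facts
  have hfd : Differentiable ℝ f := hf.differentiable (by simp)
  have hdf2 : ContDiff ℝ 2 (deriv f) :=
    (contDiff_succ_iff_deriv.mp (show ContDiff ℝ (2+1) f from hf.of_le (WithTop.coe_le_coe.mpr le_top))).2.2
  have hdfd : Differentiable ℝ (deriv f) := hdf2.differentiable (by norm_num)
  have hddf1 : ContDiff ℝ 1 (deriv (deriv f)) :=
    (contDiff_succ_iff_deriv.mp (show ContDiff ℝ (1+1) (deriv f) from hdf2)).2.2
  have hddfd : Differentiable ℝ (deriv (deriv f)) := hddf1.differentiable (by norm_num)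
  -- y is C^n on Ioo (-ε) ε
  have hyd : ∀ n : ℕ, ContDiffOn ℝ n y (Set.Ioo (-ε) ε) := by
    intro n
    induction n with
    | zero =>
      rw [show ((0:ℕ) : WithTop ℕ∞) = 0 from rfl, contDiffOn_zero]
      exact fun t ht => ((hy t ht).continuousAt).continuousWithinAt
    | succ n IH =>
      rw [show ((n+1:ℕ) : WithTop ℕ∞) = (n : WithTop ℕ∞) + 1 by norm_cast]
      rw [contDiffOn_succ_iff_deriv_of_isOpen isOpen_Ioo]
      refine ⟨fun t ht => ((hy t ht).differentiableAt).differentiableWithinAt, ?_, ?_⟩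
      · intro hω; simp at hω
      · exact ((hf.of_le (by exact_mod_cast le_top)).comp_contDiffOn IH).congr fun t ht => (hy t ht).deriv
  -- Taylor expansion of y on [0, ε/2]
  have hδb : (0:ℝ) < ε/2 := by linarith
  have hsub : Set.Icc (0:ℝ) (ε/2) ⊆ Set.Ioo (-ε) ε := by
    intro x hx
    constructor <;> [linarith [hx.1]; linarith [hx.2]]
  obtain ⟨C₁, hC₁⟩ := rk4aux_taylor3 (g := y) (g₁ := fun t => f (y t))
      (g₂ := fun t => deriv f (y t) * f (y t))
      (g₃ := fun t => deriv (deriv f) (y t) * f (y t) * f (y t)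
        + deriv f (y t) * (deriv f (y t) * f (y t)))
      hδb ((hyd 4).mono hsub)
      (fun t ht => hy t (hsub ht))
      (fun t ht => by
        simpa [Function.comp_def] using HasDerivAt.comp t (hfd (y t)).hasDerivAt (hy t (hsub ht)))
      (fun t ht => by
        have hA : HasDerivAt (fun t => deriv f (y t)) (deriv (deriv f) (y t) * f (y t)) t := by
          simpa [Function.comp_def] using HasDerivAt.comp t (hdfd (y t)).hasDerivAt (hy t (hsub ht))
        have hB : HasDerivAt (fun t => f (y t)) (deriv f (y t) * f (y t)) t := by
          simpa [Function.comp_def] using HasDerivAt.comp t (hfd (y t)).hasDerivAt (hy t (hsub ht))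
        exact hA.mul hB)
  simp only [hy0] at hC₁
  obtain ⟨C₁', hC₁'def⟩ : ∃ x : ℝ, x = max C₁ 0 := ⟨_, rfl⟩
  have hC₁'nn : (0:ℝ) ≤ C₁' := by rw [hC₁'def]; exact le_max_right _ _
  have hC₁' : ∀ x ∈ Set.Icc (0:ℝ) (ε/2),
      |y x - (y₀ + f y₀ * x + deriv f y₀ * f y₀ * (x^2/2)
        + (deriv (deriv f) y₀ * f y₀ * f y₀ + deriv f y₀ * (deriv f y₀ * f y₀)) * (x^3/6))|
        ≤ C₁' * x^4 := by
    intro x hx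
    refine (hC₁ x hx).trans ?_
    have : (0:ℝ) ≤ x^4 := by positivity
    rw [hC₁'def]
    exact mul_le_mul_of_nonneg_right (le_max_left _ _) this
  -- cubic Taylor remainder of f at y₀
  obtain ⟨C₀, hC₀nn, hC₀⟩ := rk4aux_cubic hfd hdfd (hf.of_le (WithTop.coe_le_coe.mpr le_top)) y₀
  -- bound on f near y₀
  obtain ⟨M, hM⟩ := (isCompact_Icc (a := y₀-1) (b := y₀+1)).exists_bound_of_continuousOn
    hfd.continuous.continuousOn
  obtain ⟨M', hM'def⟩ : ∃ x : ℝ, x = max M 1 := ⟨_, rfl⟩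
  have hM'1 : (1:ℝ) ≤ M' := by rw [hM'def]; exact le_max_right _ _
  have hM' : ∀ u : ℝ, |u| ≤ 1 → |f (y₀ + u)| ≤ M' := by
    intro u hu
    have := abs_le.mp hu
    have hmem : y₀ + u ∈ Set.Icc (y₀-1) (y₀+1) := ⟨by linarith, by linarith⟩
    rw [hM'def]
    exact le_trans (hM _ hmem) (le_max_left _ _)
  -- Lipschitz bound for f near y₀
  obtain ⟨L, hL⟩ := (isCompact_Icc (a := y₀-1) (b := y₀+1)).exists_bound_of_continuousOn
    hdfd.continuous.continuousOn
  obtain ⟨L', hL'def⟩ : ∃ x : ℝ, x = max L 0 := ⟨_, rfl⟩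
  have hL'nn : (0:ℝ) ≤ L' := by rw [hL'def]; exact le_max_right _ _
  have hLip : ∀ u v : ℝ, |u| ≤ 1 → |v| ≤ 1 → |f (y₀ + u) - f (y₀ + v)| ≤ L' * |u - v| := by
    intro u v hu hv
    have hu' := abs_le.mp hu
    have hv' := abs_le.mp hv
    have humem : y₀ + u ∈ Set.Icc (y₀-1) (y₀+1) := ⟨by linarith, by linarith⟩
    have hvmem : y₀ + v ∈ Set.Icc (y₀-1) (y₀+1) := ⟨by linarith, by linarith⟩
    have := Convex.norm_image_sub_le_of_norm_hasDerivWithin_le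
      (f := f) (f' := deriv f) (s := Set.Icc (y₀-1) (y₀+1)) (C := L')
      (fun x _ => (hfd x).hasDerivAt.hasDerivWithinAt)
      (fun x hx => le_trans (hL x hx) (hL'def ▸ le_max_left _ _))
      (convex_Icc _ _) hvmem humem
    simpa [Real.norm_eq_abs, add_sub_add_left_eq_sub] using this
  -- abbreviations for constants
  obtain ⟨aa, haa⟩ : ∃ x : ℝ, x = deriv f y₀ * f y₀ / 2 := ⟨_, rfl⟩
  obtain ⟨b2, hb2⟩ : ∃ x : ℝ, x = deriv (deriv f) y₀ * (f y₀)^2 / 8 := ⟨_, rfl⟩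
  obtain ⟨c3, hc3⟩ : ∃ x : ℝ, x = (deriv f y₀)^2 * f y₀ / 4 + deriv (deriv f) y₀ * (f y₀)^2 / 8 := ⟨_, rfl⟩
  obtain ⟨d3, hd3⟩ : ∃ x : ℝ, x = (deriv f y₀)^2 * f y₀ / 2 + deriv (deriv f) y₀ * (f y₀)^2 / 2 := ⟨_, rfl⟩
  obtain ⟨K₂, hK₂⟩ : ∃ x : ℝ, x = |f y₀| + |aa| + |b2| := ⟨_, rfl⟩
  obtain ⟨K₃, hK₃⟩ : ∃ x : ℝ, x = |f y₀| + |aa| + |c3| := ⟨_, rfl⟩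
  obtain ⟨C₂, hC₂⟩ : ∃ x : ℝ, x = C₀ * |f y₀|^3 / 8 := ⟨_, rfl⟩
  have hC₂nn : (0:ℝ) ≤ C₂ := by
    rw [hC₂]
    exact div_nonneg (mul_nonneg hC₀nn (pow_nonneg (abs_nonneg _) 3)) (by norm_num)
  obtain ⟨Q3, hQ3⟩ : ∃ x : ℝ, x = |deriv f y₀ * b2 / 2 + deriv (deriv f) y₀ * f y₀ * aa / 4|
      + |deriv (deriv f) y₀ * (aa^2 + 2 * f y₀ * b2) / 8|
      + |deriv (deriv f) y₀ * aa * b2 / 4|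
      + |deriv (deriv f) y₀ * b2^2 / 8| := ⟨_, rfl⟩
  have hQ3nn : (0:ℝ) ≤ Q3 := by rw [hQ3]; positivity
  obtain ⟨C₃, hC₃⟩ : ∃ x : ℝ, x = L' * C₂ / 2 + C₀ * K₂^3 / 8 + Q3 := ⟨_, rfl⟩
  have hK₂nn : (0:ℝ) ≤ K₂ := by rw [hK₂]; positivity
  have hK₃nn : (0:ℝ) ≤ K₃ := by rw [hK₃]; positivity
  have hC₃nn : (0:ℝ) ≤ C₃ := by
    rw [hC₃]
    have h1 : (0:ℝ) ≤ L' * C₂ / 2 := div_nonneg (mul_nonneg hL'nn hC₂nn) (by norm_num)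
    have h2 : (0:ℝ) ≤ C₀ * K₂^3 / 8 :=
      div_nonneg (mul_nonneg hC₀nn (pow_nonneg hK₂nn 3)) (by norm_num)
    linarith
  obtain ⟨Q4, hQ4⟩ : ∃ x : ℝ, x = |deriv f y₀ * c3 + deriv (deriv f) y₀ * f y₀ * aa|
      + |deriv (deriv f) y₀ * (aa^2 + 2 * f y₀ * c3) / 2|
      + |deriv (deriv f) y₀ * aa * c3|
      + |deriv (deriv f) y₀ * c3^2 / 2| := ⟨_, rfl⟩
  have hQ4nn : (0:ℝ) ≤ Q4 := by rw [hQ4]; positivity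
  obtain ⟨C₄, hC₄⟩ : ∃ x : ℝ, x = L' * C₃ + C₀ * K₃^3 + Q4 := ⟨_, rfl⟩
  have hC₄nn : (0:ℝ) ≤ C₄ := by
    rw [hC₄]
    have h1 : (0:ℝ) ≤ L' * C₃ := mul_nonneg hL'nn hC₃nn
    have h2 : (0:ℝ) ≤ C₀ * K₃^3 := mul_nonneg hC₀nn (pow_nonneg hK₃nn 3)
    linarith
  obtain ⟨K, hK⟩ : ∃ x : ℝ, x = |f y₀| + M' + K₂ + K₃ + 1 := ⟨_, rfl⟩
  have hK1 : (1:ℝ) ≤ K := by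
    rw [hK]
    have := abs_nonneg (f y₀)
    linarith
  have hK0 : (0:ℝ) < K := by linarith
  obtain ⟨δ, hδdef⟩ : ∃ x : ℝ, x = min (ε/2) (1/K) := ⟨_, rfl⟩
  have hδ0 : (0:ℝ) < δ := by rw [hδdef]; exact lt_min hδb (one_div_pos.mpr hK0)
  obtain ⟨G3, hG3⟩ : ∃ x : ℝ, x = deriv (deriv f) y₀ * f y₀ * f y₀ + deriv f y₀ * (deriv f y₀ * f y₀) := ⟨_, rfl⟩
  obtain ⟨Ctot, hCtot⟩ : ∃ x : ℝ, x = (1/2)*(2*C₂+2*C₃+C₄) + (2/3)*(C₂+C₃+C₄) + C₁' := ⟨_, rfl⟩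
  rw [isBigO_iff]
  refine ⟨Ctot, ?_⟩
  filter_upwards [Ioc_mem_nhdsGT_of_mem (Set.mem_Ico.mpr ⟨le_refl (0:ℝ), hδ0⟩)] with Δt hΔt
  obtain ⟨hΔt0, hΔtδ⟩ := hΔt
  have hΔtK : Δt ≤ 1/K := hΔtδ.trans (by rw [hδdef]; exact min_le_right _ _)
  have hΔtb : Δt ≤ ε/2 := hΔtδ.trans (by rw [hδdef]; exact min_le_left _ _)
  have hΔ1 : Δt ≤ 1 := by
    refine hΔtK.trans ?_
    rw [div_le_one hK0]; exact hK1
  have hΔabs : |Δt| = Δt := abs_of_pos hΔt0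
  have hmul : ∀ X : ℝ, 0 ≤ X → X ≤ K → Δt * X ≤ 1 := by
    intro X hX0 hXK
    calc Δt * X ≤ (1/K) * X := mul_le_mul_of_nonneg_right hΔtK hX0
      _ ≤ (1/K) * K := mul_le_mul_of_nonneg_left hXK (one_div_pos.mpr hK0).le
      _ = 1 := by field_simp
  have hFK : |f y₀| ≤ K := by rw [hK]; have := abs_nonneg (f y₀); linarith
  have hM'K : M' ≤ K := by rw [hK]; have := abs_nonneg (f y₀); linarith
  have hK₂K : K₂ ≤ K := by rw [hK]; have := abs_nonneg (f y₀); linarith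
  have hK₃K : K₃ ≤ K := by rw [hK]; have := abs_nonneg (f y₀); linarith
  have hΔF : Δt * |f y₀| ≤ 1 := hmul _ (abs_nonneg _) hFK
  have hΔM : Δt * M' ≤ 1 := hmul _ (by linarith) hM'K
  have hΔK₂ : Δt * K₂ ≤ 1 := hmul _ hK₂nn hK₂K
  have hΔK₃ : Δt * K₃ ≤ 1 := hmul _ hK₃nn hK₃K
  obtain ⟨p2, hp2⟩ : ∃ x : ℝ, x = f y₀ * Δt + aa * Δt^2 + b2 * Δt^3 := ⟨_, rfl⟩
  obtain ⟨p3, hp3⟩ : ∃ x : ℝ, x = f y₀ * Δt + aa * Δt^2 + c3 * Δt^3 := ⟨_, rfl⟩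
  obtain ⟨p4, hp4⟩ : ∃ x : ℝ, x = f y₀ * Δt + 2*aa * Δt^2 + d3 * Δt^3 := ⟨_, rfl⟩
  have hk1v : k₁ Δt = Δt * f y₀ := hk₁ Δt
  have hu2eq : |Δt * f y₀ / 2| = Δt * |f y₀| / 2 := by
    rw [abs_div, abs_mul, hΔabs, abs_two]
  have hu2 : |Δt * f y₀ / 2| ≤ 1 := by rw [hu2eq]; linarith
  have hk2v : k₂ Δt = Δt * f (y₀ + Δt * f y₀ / 2) := by rw [hk₂, hk1v]
  -- e₂ bound
  have he2 : |k₂ Δt - p2| ≤ C₂ * Δt^4 := by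
    have hcub := hC₀ (Δt * f y₀ / 2) hu2
    calc |k₂ Δt - p2|
        = |Δt| * |f (y₀ + Δt * f y₀ / 2) - (f y₀ + deriv f y₀ * (Δt * f y₀ / 2)
            + deriv (deriv f) y₀ * ((Δt * f y₀ / 2)^2/2))| := by
          rw [← abs_mul, hk2v, hp2, haa, hb2]; congr 1; ring
      _ ≤ Δt * (C₀ * |Δt * f y₀ / 2|^3) := by
          rw [hΔabs]; exact mul_le_mul_of_nonneg_left hcub hΔt0.le
      _ = Δt * (C₀ * (Δt * |f y₀| / 2)^3) := by rw [hu2eq]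
      _ = C₂ * Δt^4 := by rw [hC₂]; ring
  -- bounds on k₂ and p2
  have hk2b : |k₂ Δt| ≤ Δt * M' := by
    rw [hk2v, abs_mul, hΔabs]
    exact mul_le_mul_of_nonneg_left (hM' _ hu2) hΔt0.le
  have hk2h : |k₂ Δt / 2| ≤ 1 := by
    rw [abs_div, abs_two]; linarith
  have hΔ2 : Δt^2 ≤ Δt := by
    simpa using pow_le_pow_of_le_one hΔt0.le hΔ1 (show 1 ≤ 2 by norm_num)
  have hΔ3 : Δt^3 ≤ Δt := by
    simpa using pow_le_pow_of_le_one hΔt0.le hΔ1 (show 1 ≤ 3 by norm_num)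
  have hp2b : |p2| ≤ Δt * K₂ := by
    rw [hp2, hK₂]
    have h1 : |f y₀ * Δt| = |f y₀| * Δt := by rw [abs_mul, hΔabs]
    have h2 : |aa * Δt^2| = |aa| * Δt^2 := by
      rw [abs_mul, abs_of_nonneg (sq_nonneg Δt)]
    have h3 : |b2 * Δt^3| = |b2| * Δt^3 := by
      rw [abs_mul, abs_of_nonneg (pow_nonneg hΔt0.le 3)]
    calc |f y₀ * Δt + aa * Δt^2 + b2 * Δt^3|
        ≤ |f y₀ * Δt| + |aa * Δt^2| + |b2 * Δt^3| := by
          refine (abs_add_le _ _).trans ?_; gcongr; exact abs_add_le _ _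
      _ ≤ |f y₀| * Δt + |aa| * Δt + |b2| * Δt := by
          rw [h1, h2, h3]
          exact add_le_add (add_le_add le_rfl
            (mul_le_mul_of_nonneg_left hΔ2 (abs_nonneg _)))
            (mul_le_mul_of_nonneg_left hΔ3 (abs_nonneg _))
      _ = Δt * (|f y₀| + |aa| + |b2|) := by ring
  have hp2h : |p2 / 2| ≤ 1 := by rw [abs_div, abs_two]; linarith
  -- e₃ bound
  have hLip3 : |f (y₀ + k₂ Δt / 2) - f (y₀ + p2 / 2)| ≤ L' * (C₂ * Δt^4 / 2) := by
    refine (hLip _ _ hk2h hp2h).trans ?_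
    have heq : |k₂ Δt / 2 - p2 / 2| = |k₂ Δt - p2| / 2 := by
      rw [show k₂ Δt / 2 - p2 / 2 = (k₂ Δt - p2)/2 by ring, abs_div, abs_two]
    rw [heq]
    have : |k₂ Δt - p2| / 2 ≤ C₂ * Δt^4 / 2 := by linarith
    exact mul_le_mul_of_nonneg_left this hL'nn
  have htay3 : |f (y₀ + p2 / 2) - (f y₀ + deriv f y₀ * (p2/2)
      + deriv (deriv f) y₀ * ((p2/2)^2/2))| ≤ C₀ * (Δt * K₂ / 2)^3 := by
    refine (hC₀ (p2/2) hp2h).trans ?_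
    refine mul_le_mul_of_nonneg_left ?_ hC₀nn
    refine pow_le_pow_left₀ (abs_nonneg _) ?_ 3
    rw [abs_div, abs_two]; linarith
  have hid3 : k₃ Δt - p3 = Δt * (f (y₀ + k₂ Δt / 2) - f (y₀ + p2 / 2))
      + Δt * (f (y₀ + p2 / 2) - (f y₀ + deriv f y₀ * (p2/2)
          + deriv (deriv f) y₀ * ((p2/2)^2/2)))
      + Δt^4 * (deriv f y₀ * b2 / 2 + deriv (deriv f) y₀ * f y₀ * aa / 4
          + Δt * (deriv (deriv f) y₀ * (aa^2 + 2 * f y₀ * b2) / 8)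
          + Δt^2 * (deriv (deriv f) y₀ * aa * b2 / 4)
          + Δt^3 * (deriv (deriv f) y₀ * b2^2 / 8)) := by
    rw [hk₃ Δt, hp2, hp3, haa, hb2, hc3]; ring
  have he3 : |k₃ Δt - p3| ≤ C₃ * Δt^4 := by
    rw [hid3]
    have hpb := rk4aux_polybound Δt
      (deriv f y₀ * b2 / 2 + deriv (deriv f) y₀ * f y₀ * aa / 4)
      (deriv (deriv f) y₀ * (aa^2 + 2 * f y₀ * b2) / 8)
      (deriv (deriv f) y₀ * aa * b2 / 4)
      (deriv (deriv f) y₀ * b2^2 / 8) hΔt0.le hΔ1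
    have hQ3' : |deriv f y₀ * b2 / 2 + deriv (deriv f) y₀ * f y₀ * aa / 4
        + Δt * (deriv (deriv f) y₀ * (aa^2 + 2 * f y₀ * b2) / 8)
        + Δt^2 * (deriv (deriv f) y₀ * aa * b2 / 4)
        + Δt^3 * (deriv (deriv f) y₀ * b2^2 / 8)| ≤ Q3 := by
      rw [hQ3]
      exact hpb
    have h5 : Δt^5 ≤ Δt^4 := pow_le_pow_of_le_one hΔt0.le hΔ1 (by norm_num)
    calc |Δt * (f (y₀ + k₂ Δt / 2) - f (y₀ + p2 / 2))
        + Δt * (f (y₀ + p2 / 2) - (f y₀ + deriv f y₀ * (p2/2)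
            + deriv (deriv f) y₀ * ((p2/2)^2/2)))
        + Δt^4 * (deriv f y₀ * b2 / 2 + deriv (deriv f) y₀ * f y₀ * aa / 4
            + Δt * (deriv (deriv f) y₀ * (aa^2 + 2 * f y₀ * b2) / 8)
            + Δt^2 * (deriv (deriv f) y₀ * aa * b2 / 4)
            + Δt^3 * (deriv (deriv f) y₀ * b2^2 / 8))|
        ≤ |Δt * (f (y₀ + k₂ Δt / 2) - f (y₀ + p2 / 2))|
          + |Δt * (f (y₀ + p2 / 2) - (f y₀ + deriv f y₀ * (p2/2)
              + deriv (deriv f) y₀ * ((p2/2)^2/2)))|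
          + |Δt^4 * (deriv f y₀ * b2 / 2 + deriv (deriv f) y₀ * f y₀ * aa / 4
              + Δt * (deriv (deriv f) y₀ * (aa^2 + 2 * f y₀ * b2) / 8)
              + Δt^2 * (deriv (deriv f) y₀ * aa * b2 / 4)
              + Δt^3 * (deriv (deriv f) y₀ * b2^2 / 8))| := by
          refine (abs_add_le _ _).trans ?_; gcongr; exact abs_add_le _ _
      _ ≤ Δt * (L' * (C₂ * Δt^4 / 2)) + Δt * (C₀ * (Δt * K₂ / 2)^3) + Δt^4 * Q3 := by
          rw [abs_mul, abs_mul, abs_mul, hΔabs,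
            abs_of_nonneg (by positivity : (0:ℝ) ≤ Δt^4)]
          gcongr
      _ ≤ C₃ * Δt^4 := by
          rw [hC₃]
          have hterm1 : Δt * (L' * (C₂ * Δt^4 / 2)) = (L' * C₂ / 2) * Δt^5 := by ring
          have hterm2 : Δt * (C₀ * (Δt * K₂ / 2)^3) = (C₀ * K₂^3 / 8) * Δt^4 := by ring
          rw [hterm1, hterm2]
          have hnn : (0:ℝ) ≤ L' * C₂ / 2 := div_nonneg (mul_nonneg hL'nn hC₂nn) (by norm_num)
          have hexp : (L' * C₂ / 2 + C₀ * K₂^3 / 8 + Q3) * Δt^4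
              = (L' * C₂ / 2) * Δt^4 + (C₀ * K₂^3 / 8) * Δt^4 + Δt^4 * Q3 := by ring
          rw [hexp]
          linarith [mul_le_mul_of_nonneg_left h5 hnn]
  -- bounds on k₃ and p3
  have hk3b : |k₃ Δt| ≤ Δt * M' := by
    rw [hk₃ Δt, abs_mul, hΔabs]
    exact mul_le_mul_of_nonneg_left (hM' _ hk2h) hΔt0.le
  have hk3h : |k₃ Δt| ≤ 1 := hk3b.trans hΔM
  have hp3b : |p3| ≤ Δt * K₃ := by
    rw [hp3, hK₃]
    have h1 : |f y₀ * Δt| = |f y₀| * Δt := by rw [abs_mul, hΔabs]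
    have h2 : |aa * Δt^2| = |aa| * Δt^2 := by
      rw [abs_mul, abs_of_nonneg (sq_nonneg Δt)]
    have h3 : |c3 * Δt^3| = |c3| * Δt^3 := by
      rw [abs_mul, abs_of_nonneg (pow_nonneg hΔt0.le 3)]
    calc |f y₀ * Δt + aa * Δt^2 + c3 * Δt^3|
        ≤ |f y₀ * Δt| + |aa * Δt^2| + |c3 * Δt^3| := by
          refine (abs_add_le _ _).trans ?_; gcongr; exact abs_add_le _ _
      _ ≤ |f y₀| * Δt + |aa| * Δt + |c3| * Δt := by
          rw [h1, h2, h3]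
          exact add_le_add (add_le_add le_rfl
            (mul_le_mul_of_nonneg_left hΔ2 (abs_nonneg _)))
            (mul_le_mul_of_nonneg_left hΔ3 (abs_nonneg _))
      _ = Δt * (|f y₀| + |aa| + |c3|) := by ring
  have hp3h : |p3| ≤ 1 := hp3b.trans hΔK₃
  -- e₄ bound
  have hLip4 : |f (y₀ + k₃ Δt) - f (y₀ + p3)| ≤ L' * (C₃ * Δt^4) := by
    refine (hLip _ _ hk3h hp3h).trans ?_
    exact mul_le_mul_of_nonneg_left he3 hL'nn
  have htay4 : |f (y₀ + p3) - (f y₀ + deriv f y₀ * p3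
      + deriv (deriv f) y₀ * (p3^2/2))| ≤ C₀ * (Δt * K₃)^3 := by
    refine (hC₀ p3 hp3h).trans ?_
    refine mul_le_mul_of_nonneg_left ?_ hC₀nn
    exact pow_le_pow_left₀ (abs_nonneg _) hp3b 3
  have hid4 : k₄ Δt - p4 = Δt * (f (y₀ + k₃ Δt) - f (y₀ + p3))
      + Δt * (f (y₀ + p3) - (f y₀ + deriv f y₀ * p3 + deriv (deriv f) y₀ * (p3^2/2)))
      + Δt^4 * (deriv f y₀ * c3 + deriv (deriv f) y₀ * f y₀ * aa
          + Δt * (deriv (deriv f) y₀ * (aa^2 + 2 * f y₀ * c3) / 2)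
          + Δt^2 * (deriv (deriv f) y₀ * aa * c3)
          + Δt^3 * (deriv (deriv f) y₀ * c3^2 / 2)) := by
    rw [hk₄ Δt, hp3, hp4, haa, hc3, hd3]; ring
  have he4 : |k₄ Δt - p4| ≤ C₄ * Δt^4 := by
    rw [hid4]
    have hpb := rk4aux_polybound Δt
      (deriv f y₀ * c3 + deriv (deriv f) y₀ * f y₀ * aa)
      (deriv (deriv f) y₀ * (aa^2 + 2 * f y₀ * c3) / 2)
      (deriv (deriv f) y₀ * aa * c3)
      (deriv (deriv f) y₀ * c3^2 / 2) hΔt0.le hΔ1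
    have hQ4' : |deriv f y₀ * c3 + deriv (deriv f) y₀ * f y₀ * aa
        + Δt * (deriv (deriv f) y₀ * (aa^2 + 2 * f y₀ * c3) / 2)
        + Δt^2 * (deriv (deriv f) y₀ * aa * c3)
        + Δt^3 * (deriv (deriv f) y₀ * c3^2 / 2)| ≤ Q4 := by
      rw [hQ4]
      exact hpb
    have h5 : Δt^5 ≤ Δt^4 := pow_le_pow_of_le_one hΔt0.le hΔ1 (by norm_num)
    calc |Δt * (f (y₀ + k₃ Δt) - f (y₀ + p3))
        + Δt * (f (y₀ + p3) - (f y₀ + deriv f y₀ * p3 + deriv (deriv f) y₀ * (p3^2/2)))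
        + Δt^4 * (deriv f y₀ * c3 + deriv (deriv f) y₀ * f y₀ * aa
            + Δt * (deriv (deriv f) y₀ * (aa^2 + 2 * f y₀ * c3) / 2)
            + Δt^2 * (deriv (deriv f) y₀ * aa * c3)
            + Δt^3 * (deriv (deriv f) y₀ * c3^2 / 2))|
        ≤ |Δt * (f (y₀ + k₃ Δt) - f (y₀ + p3))|
          + |Δt * (f (y₀ + p3) - (f y₀ + deriv f y₀ * p3 + deriv (deriv f) y₀ * (p3^2/2)))|
          + |Δt^4 * (deriv f y₀ * c3 + deriv (deriv f) y₀ * f y₀ * aa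
              + Δt * (deriv (deriv f) y₀ * (aa^2 + 2 * f y₀ * c3) / 2)
              + Δt^2 * (deriv (deriv f) y₀ * aa * c3)
              + Δt^3 * (deriv (deriv f) y₀ * c3^2 / 2))| := by
          refine (abs_add_le _ _).trans ?_; gcongr; exact abs_add_le _ _
      _ ≤ Δt * (L' * (C₃ * Δt^4)) + Δt * (C₀ * (Δt * K₃)^3) + Δt^4 * Q4 := by
          rw [abs_mul, abs_mul, abs_mul, hΔabs,
            abs_of_nonneg (by positivity : (0:ℝ) ≤ Δt^4)]
          gcongr
      _ ≤ C₄ * Δt^4 := by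
          rw [hC₄]
          have hterm1 : Δt * (L' * (C₃ * Δt^4)) = (L' * C₃) * Δt^5 := by ring
          have hterm2 : Δt * (C₀ * (Δt * K₃)^3) = (C₀ * K₃^3) * Δt^4 := by ring
          rw [hterm1, hterm2]
          have hnn : (0:ℝ) ≤ L' * C₃ := mul_nonneg hL'nn hC₃nn
          have hexp : (L' * C₃ + C₀ * K₃^3 + Q4) * Δt^4
              = (L' * C₃) * Δt^4 + (C₀ * K₃^3) * Δt^4 + Δt^4 * Q4 := by ring
          rw [hexp]
          linarith [mul_le_mul_of_nonneg_left h5 hnn]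
  -- the interpolation identity
  have hTid : ∀ χ : ℝ, y₀ + χ * (Δt * f y₀)
      + χ^2/2 * (-3*(Δt * f y₀) + 2*p2 + 2*p3 - p4)
      + 2*χ^3/3 * ((Δt * f y₀) - p2 - p3 + p4)
      = y₀ + f y₀ * (χ*Δt) + deriv f y₀ * f y₀ * ((χ*Δt)^2/2) + G3 * ((χ*Δt)^3/6) := by
    intro χ
    rw [hp2, hp3, hp4, haa, hb2, hc3, hd3, hG3]; ring
  -- pointwise bound
  have hpt : ∀ χ : ℝ, 0 ≤ χ → χ ≤ 1 → |P Δt χ - y (χ*Δt)| ≤ Ctot * Δt^4 := by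
    intro χ hχ0 hχ1
    have hsplit : P Δt χ - y (χ*Δt) =
        (χ^2/2 * (2*(k₂ Δt - p2) + 2*(k₃ Δt - p3) - (k₄ Δt - p4))
          + 2*χ^3/3 * (-(k₂ Δt - p2) - (k₃ Δt - p3) + (k₄ Δt - p4)))
        + ((y₀ + f y₀ * (χ*Δt) + deriv f y₀ * f y₀ * ((χ*Δt)^2/2) + G3 * ((χ*Δt)^3/6))
            - y (χ*Δt)) := by
      rw [hP, hk1v, ← hTid χ]; ring
    rw [hsplit]
    have hE2 := he2; have hE3 := he3; have hE4 := he4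
    have habs1 : |χ^2/2 * (2*(k₂ Δt - p2) + 2*(k₃ Δt - p3) - (k₄ Δt - p4))|
        ≤ (1/2) * (2*C₂ + 2*C₃ + C₄) * Δt^4 := by
      rw [abs_mul]
      have hc : |χ^2/2| ≤ 1/2 := by
        rw [abs_of_nonneg (div_nonneg (sq_nonneg χ) (by norm_num))]
        have := pow_le_one₀ hχ0 hχ1 (n := 2)
        linarith
      have hsum : |2*(k₂ Δt - p2) + 2*(k₃ Δt - p3) - (k₄ Δt - p4)|
          ≤ 2*(C₂*Δt^4) + 2*(C₃*Δt^4) + C₄*Δt^4 := by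
        calc |2*(k₂ Δt - p2) + 2*(k₃ Δt - p3) - (k₄ Δt - p4)|
            ≤ |2*(k₂ Δt - p2) + 2*(k₃ Δt - p3)| + |k₄ Δt - p4| := abs_sub _ _
          _ ≤ |2*(k₂ Δt - p2)| + |2*(k₃ Δt - p3)| + |k₄ Δt - p4| := by
              gcongr; exact abs_add_le _ _
          _ ≤ 2*(C₂*Δt^4) + 2*(C₃*Δt^4) + C₄*Δt^4 := by
              rw [abs_mul, abs_mul, abs_two]
              gcongr
      calc |χ^2/2| * |2*(k₂ Δt - p2) + 2*(k₃ Δt - p3) - (k₄ Δt - p4)|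
          ≤ (1/2) * (2*(C₂*Δt^4) + 2*(C₃*Δt^4) + C₄*Δt^4) :=
            mul_le_mul hc hsum (abs_nonneg _) (by norm_num)
        _ = (1/2) * (2*C₂ + 2*C₃ + C₄) * Δt^4 := by ring
    have habs2 : |2*χ^3/3 * (-(k₂ Δt - p2) - (k₃ Δt - p3) + (k₄ Δt - p4))|
        ≤ (2/3) * (C₂ + C₃ + C₄) * Δt^4 := by
      rw [abs_mul]
      have hc : |2*χ^3/3| ≤ 2/3 := by
        rw [abs_of_nonneg (div_nonneg (mul_nonneg (by norm_num) (pow_nonneg hχ0 3)) (by norm_num))]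
        have := pow_le_one₀ hχ0 hχ1 (n := 3)
        linarith
      have hsum : |-(k₂ Δt - p2) - (k₃ Δt - p3) + (k₄ Δt - p4)|
          ≤ C₂*Δt^4 + C₃*Δt^4 + C₄*Δt^4 := by
        calc |-(k₂ Δt - p2) - (k₃ Δt - p3) + (k₄ Δt - p4)|
            ≤ |-(k₂ Δt - p2) - (k₃ Δt - p3)| + |k₄ Δt - p4| := abs_add_le _ _
          _ ≤ |-(k₂ Δt - p2)| + |k₃ Δt - p3| + |k₄ Δt - p4| := by
              gcongr; exact abs_sub _ _
          _ ≤ C₂*Δt^4 + C₃*Δt^4 + C₄*Δt^4 := by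
              rw [abs_neg]
              gcongr
      calc |2*χ^3/3| * |-(k₂ Δt - p2) - (k₃ Δt - p3) + (k₄ Δt - p4)|
          ≤ (2/3) * (C₂*Δt^4 + C₃*Δt^4 + C₄*Δt^4) :=
            mul_le_mul hc hsum (abs_nonneg _) (by norm_num)
        _ = (2/3) * (C₂ + C₃ + C₄) * Δt^4 := by ring
    have habs3 : |(y₀ + f y₀ * (χ*Δt) + deriv f y₀ * f y₀ * ((χ*Δt)^2/2)
        + G3 * ((χ*Δt)^3/6)) - y (χ*Δt)| ≤ C₁' * Δt^4 := by
      have hmem : χ*Δt ∈ Set.Icc (0:ℝ) (ε/2) := by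
        constructor
        · exact mul_nonneg hχ0 hΔt0.le
        · exact le_trans (mul_le_of_le_one_left hΔt0.le hχ1) hΔtb
      have := hC₁' (χ*Δt) hmem
      rw [abs_sub_comm]
      rw [hG3]
      refine this.trans ?_
      have hpow : (χ*Δt)^4 ≤ Δt^4 := by
        have h1 : 0 ≤ χ*Δt := mul_nonneg hχ0 hΔt0.le
        have h2 : χ*Δt ≤ Δt := mul_le_of_le_one_left hΔt0.le hχ1
        exact pow_le_pow_left₀ h1 h2 4
      exact mul_le_mul_of_nonneg_left hpow hC₁'nn
    calc |(χ^2/2 * (2*(k₂ Δt - p2) + 2*(k₃ Δt - p3) - (k₄ Δt - p4))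
          + 2*χ^3/3 * (-(k₂ Δt - p2) - (k₃ Δt - p3) + (k₄ Δt - p4)))
        + ((y₀ + f y₀ * (χ*Δt) + deriv f y₀ * f y₀ * ((χ*Δt)^2/2) + G3 * ((χ*Δt)^3/6))
            - y (χ*Δt))|
        ≤ |χ^2/2 * (2*(k₂ Δt - p2) + 2*(k₃ Δt - p3) - (k₄ Δt - p4))
            + 2*χ^3/3 * (-(k₂ Δt - p2) - (k₃ Δt - p3) + (k₄ Δt - p4))|
          + |(y₀ + f y₀ * (χ*Δt) + deriv f y₀ * f y₀ * ((χ*Δt)^2/2) + G3 * ((χ*Δt)^3/6))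
              - y (χ*Δt)| := abs_add_le _ _
      _ ≤ (|χ^2/2 * (2*(k₂ Δt - p2) + 2*(k₃ Δt - p3) - (k₄ Δt - p4))|
            + |2*χ^3/3 * (-(k₂ Δt - p2) - (k₃ Δt - p3) + (k₄ Δt - p4))|)
          + |(y₀ + f y₀ * (χ*Δt) + deriv f y₀ * f y₀ * ((χ*Δt)^2/2) + G3 * ((χ*Δt)^3/6))
              - y (χ*Δt)| := by gcongr; exact abs_add_le _ _
      _ ≤ ((1/2) * (2*C₂ + 2*C₃ + C₄) * Δt^4 + (2/3) * (C₂ + C₃ + C₄) * Δt^4)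
          + C₁' * Δt^4 := by gcongr
      _ = Ctot * Δt^4 := by rw [hCtot]; ring
  -- conclude via the supremum
  have hub : ∀ χ : Set.Icc (0:ℝ) 1, |P Δt χ - y ((χ:ℝ) * Δt)| ≤ Ctot * Δt^4 :=
    fun χ => hpt χ χ.2.1 χ.2.2
  have hbdd : BddAbove (Set.range fun χ : Set.Icc (0:ℝ) 1 => |P Δt χ - y ((χ:ℝ) * Δt)|) := by
    refine ⟨Ctot * Δt^4, ?_⟩
    rintro x ⟨χ, rfl⟩
    exact hub χ
  have hsup_le : (⨆ χ : Set.Icc (0:ℝ) 1, |P Δt χ - y ((χ:ℝ) * Δt)|) ≤ Ctot * Δt^4 :=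
    ciSup_le hub
  have hsup_nn : (0:ℝ) ≤ ⨆ χ : Set.Icc (0:ℝ) 1, |P Δt χ - y ((χ:ℝ) * Δt)| := by
    refine le_trans (abs_nonneg (P Δt ((⟨0, by norm_num⟩ : Set.Icc (0:ℝ) 1) : ℝ)
      - y (((⟨0, by norm_num⟩ : Set.Icc (0:ℝ) 1) : ℝ) * Δt))) ?_
    exact le_ciSup hbdd _
  rw [Real.norm_eq_abs, Real.norm_eq_abs, abs_of_nonneg hsup_nn,
    abs_of_nonneg (by positivity : (0:ℝ) ≤ Δt^4)]
  exact hsup_le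
end

section
/- The 5 × 5 rational matrix M = [[1, 0, 0, 0, 0], [1, 3/10, 9/200, 0, 9/2000], [1, 3/5, 9/50, 27/500, 9/250], [1, 1, 1/2, 7/60, 1/6], [1, 7/8, 49/128, 161/1536, 343/3072]] has determinant zero. Consequently the linear system expressing the elementary differentials f, f'f, (f f'² + f² f''), f f'³, (4 f² f' f'' + f³ f''') in terms of the Cash–Karp stages k₁, k₃, k₄, k₅, k₆ does not have a unique solution, so a quartic run-time interpolant cannot be constructed this way from the Cash–Karp 4-5 stages. -/
/-! The columns of `M` are linearly dependent: `(0, 3, -24, 20, 40)` lies in its kernel, which forces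
both `det M = 0` and the non-injectivity of `v ↦ M v`. -/

theorem Matrix.not_injective_mulVec_of_mulVec_eq_zero {n R : Type*} [Fintype n] [Semiring R]
    {M : Matrix n n R} {v : n → R} (hv : v ≠ 0) (hMv : M.mulVec v = 0) :
    ¬ Function.Injective M.mulVec := fun hinj =>
  hv <| hinj <| by rw [hMv, Matrix.mulVec_zero]

theorem stmt_13 (M : Matrix (Fin 5) (Fin 5) ℚ)
    (hM : M = !![1, 0, 0, 0, 0;
                 1, 3/10, 9/200, 0, 9/2000;
                 1, 3/5, 9/50, 27/500, 9/250;
                 1, 1, 1/2, 7/60, 1/6;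
                 1, 7/8, 49/128, 161/1536, 343/3072]) :
    M.det = 0 ∧ ¬ Function.Injective M.mulVec := by
  set v : Fin 5 → ℚ := ![0, 3, -24, 20, 40]
  have hv : v ≠ 0 := fun h => by simpa [v] using congrFun h 1
  have hMv : M.mulVec v = 0 := by
    subst hM
    ext i
    fin_cases i <;> norm_num [v]
  exact ⟨Matrix.exists_mulVec_eq_zero_iff.mp ⟨v, hv, hMv⟩,
    Matrix.not_injective_mulVec_of_mulVec_eq_zero hv hMv⟩
end

section
/- Let f : ℝ → ℝ be smooth (C^∞), y₀ ∈ ℝ, and let y be the solution of y' = f(y), y(0) = y₀ on a neighborhood of 0. For Δt > 0 define the Cash–Karp stages k₁ = Δt f(y₀), k₂ = Δt f(y₀ + k₁/5), k₃ = Δt f(y₀ + 3k₁/40 + 9k₂/40), k₄ = Δt f(y₀ + 3k₁/10 − 9k₂/10 + 6k₃/5), k₅ = Δt f(y₀ − 11k₁/54 + 5k₂/2 − 70k₃/27 + 35k₄/27), and the cubic interpolant P(χ) = y₀ + χ k₁ + (χ²/2)(−(8/3)k₁ + (25/6)k₄ − (3/2)k₅) + (χ³/6)((10/3)k₁ − (25/3)k₄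 + 5k₅). Then sup_{χ ∈ [0,1]} |P(χ) − y(χ Δt)| = O(Δt⁴) as Δt → 0⁺; i.e. this run-time interpolant built from the Cash–Karp stages k₁, k₄, k₅ is third-order accurate. -/
open scoped Topology
open Filter Asymptotics Set ContDiff

lemma pow_isBigO_pow_nhds_zero {m n : ℕ} (h : m ≤ n) :
    (fun t : ℝ => t ^ n) =O[𝓝 (0:ℝ)] fun t => t ^ m := by
  rw [isBigO_iff]
  refine ⟨1, ?_⟩
  have hev : ∀ᶠ t : ℝ in 𝓝 0, |t| ≤ 1 := by
    filter_upwards [Metric.closedBall_mem_nhds (0:ℝ) (by norm_num : (0:ℝ) < 1)] with t ht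
    simpa [Real.dist_eq] using ht
  filter_upwards [hev] with t ht
  simp only [Real.norm_eq_abs, abs_pow, one_mul]
  exact pow_le_pow_of_le_one (abs_nonneg t) ht h

lemma const_mul_pow_isBigO (k : ℝ) {m n : ℕ} (h : n ≤ m) :
    (fun t : ℝ => k * t ^ m) =O[𝓝 (0:ℝ)] fun t => t ^ n :=
  ((isBigO_refl (fun t : ℝ => t ^ m) _).const_mul_left k).trans (pow_isBigO_pow_nhds_zero h)

lemma stage_s14 {f : ℝ → ℝ} {y₀ F1 d1 d2 : ℝ}
    (hρ : (fun h : ℝ => f (y₀ + h) - (F1 + d1 * h + d2 / 2 * h ^ 2)) =O[𝓝 (0:ℝ)]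
      fun h => h ^ 3)
    (a c : ℝ) {v : ℝ → ℝ}
    (hw : (fun t => v t - (a * t * F1 + c * t ^ 2 * (d1 * F1))) =O[𝓝 (0:ℝ)] fun t => t ^ 3) :
    (fun t => t * f (y₀ + v t) -
        (t * F1 + a * t ^ 2 * (d1 * F1) +
          t ^ 3 * (a ^ 2 / 2 * (d2 * F1 ^ 2) + c * (d1 * (d1 * F1))))) =O[𝓝 (0:ℝ)]
      fun t => t ^ 4 := by
  have hvO : v =O[𝓝 (0:ℝ)] fun t => t ^ 1 := by
    have h1 := hw.trans (pow_isBigO_pow_nhds_zero (by norm_num : 1 ≤ 3))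
    have ha : (fun t : ℝ => (a * F1) * t ^ 1) =O[𝓝 (0:ℝ)] fun t => t ^ 1 :=
      const_mul_pow_isBigO _ le_rfl
    have hc : (fun t : ℝ => (c * (d1 * F1)) * t ^ 2) =O[𝓝 (0:ℝ)] fun t => t ^ 1 :=
      const_mul_pow_isBigO _ (by norm_num)
    refine ((h1.add ha).add hc).congr' (Eventually.of_forall fun t => by ring) EventuallyEq.rfl
  have hv0 : Filter.Tendsto v (𝓝 0) (𝓝 (0:ℝ)) := by
    refine hvO.trans_tendsto ?_
    simp only [pow_one]; exact Filter.tendsto_id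
  have hcube : (fun t => (v t) ^ 3) =O[𝓝 (0:ℝ)] fun t => t ^ 3 := by
    have := hvO.pow 3
    simpa [← pow_mul] using this
  have t1 : (fun t => t * (f (y₀ + v t) - (F1 + d1 * v t + d2 / 2 * (v t) ^ 2)))
      =O[𝓝 (0:ℝ)] fun t => t ^ 4 := by
    have hcomp := hρ.comp_tendsto hv0
    have hcomp' : (fun t => f (y₀ + v t) - (F1 + d1 * v t + d2 / 2 * (v t) ^ 2))
        =O[𝓝 (0:ℝ)] fun t => (v t) ^ 3 := by
      simpa [Function.comp_def] using hcomp
    refine (((isBigO_refl (fun t : ℝ => t) _).mul (hcomp'.trans hcube))).congr'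
      EventuallyEq.rfl (Eventually.of_forall fun t => by ring)
  have t2 : (fun t => t * (d1 * (v t - (a * t * F1 + c * t ^ 2 * (d1 * F1)))))
      =O[𝓝 (0:ℝ)] fun t => t ^ 4 := by
    refine (((isBigO_refl (fun t : ℝ => t) _).mul (hw.const_mul_left d1))).congr'
      EventuallyEq.rfl (Eventually.of_forall fun t => by ring)
  have factor1 : (fun t => v t - a * t * F1) =O[𝓝 (0:ℝ)] fun t => t ^ 2 := by
    have h1 := hw.trans (pow_isBigO_pow_nhds_zero (by norm_num : 2 ≤ 3))
    have h2 : (fun t : ℝ => (c * (d1 * F1)) * t ^ 2) =O[𝓝 (0:ℝ)] fun t => t ^ 2 :=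
      const_mul_pow_isBigO _ le_rfl
    refine (h1.add h2).congr' (Eventually.of_forall fun t => by ring) EventuallyEq.rfl
  have factor2 : (fun t => v t + a * t * F1) =O[𝓝 (0:ℝ)] fun t => t ^ 1 := by
    have h2 : (fun t : ℝ => (a * F1) * t ^ 1) =O[𝓝 (0:ℝ)] fun t => t ^ 1 :=
      const_mul_pow_isBigO _ le_rfl
    refine (hvO.add h2).congr' (Eventually.of_forall fun t => by ring) EventuallyEq.rfl
  have t3 : (fun t => t * (d2 / 2 * ((v t) ^ 2 - (a * t * F1) ^ 2)))
      =O[𝓝 (0:ℝ)] fun t => t ^ 4 := by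
    have hprod := factor1.mul factor2
    refine (((isBigO_refl (fun t : ℝ => t) _).mul (hprod.const_mul_left (d2 / 2)))).congr'
      (Eventually.of_forall fun t => by ring) (Eventually.of_forall fun t => by ring)
  refine ((t1.add t2).add t3).congr' (Eventually.of_forall fun t => by ring) EventuallyEq.rfl

lemma bigO_step {g g' : ℝ → ℝ} {n : ℕ} (h0 : g 0 = 0)
    (hd : ∀ᶠ t in 𝓝 (0:ℝ), HasDerivAt g (g' t) t)
    (hO : g' =O[𝓝 (0:ℝ)] fun t => t ^ n) :
    g =O[𝓝 (0:ℝ)] fun t => t ^ (n + 1) := by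
  obtain ⟨C, hC⟩ := hO.bound
  obtain ⟨δ, hδ, hball⟩ := Metric.eventually_nhds_iff.mp (hd.and hC)
  rw [isBigO_iff]
  refine ⟨|C|, ?_⟩
  have hev : ∀ᶠ t : ℝ in 𝓝 0, |t| < δ := by
    filter_upwards [Metric.ball_mem_nhds (0:ℝ) hδ] with t ht
    simpa [Real.dist_eq] using ht
  filter_upwards [hev] with h hh
  have key : ∀ x ∈ uIcc (0:ℝ) h, |x| ≤ |h| := by
    intro x hx
    rw [Set.mem_uIcc] at hx
    rcases hx with ⟨h1, h2⟩ | ⟨h1, h2⟩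
    · rw [abs_of_nonneg h1, abs_of_nonneg (h1.trans h2)]; exact h2
    · rw [abs_of_nonpos h2, abs_of_nonpos (h1.trans h2)]; linarith
  have hmem : ∀ x ∈ uIcc (0:ℝ) h, dist x 0 < δ := fun x hx => by
    simpa [Real.dist_eq] using lt_of_le_of_lt (key x hx) hh
  have hmvt := (convex_uIcc (0:ℝ) h).norm_image_sub_le_of_norm_hasDerivWithin_le
    (f := g) (f' := g') (C := |C| * |h| ^ n)
    (fun x hx => ((hball (hmem x hx)).1).hasDerivWithinAt)
    (fun x hx => by
      calc ‖g' x‖ ≤ C * ‖x ^ n‖ := (hball (hmem x hx)).2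
        _ ≤ |C| * |h| ^ n := by
            rw [Real.norm_eq_abs, abs_pow]
            have h1 : C * |x| ^ n ≤ |C| * |x| ^ n :=
              mul_le_mul_of_nonneg_right (le_abs_self C) (pow_nonneg (abs_nonneg x) n)
            refine h1.trans (mul_le_mul_of_nonneg_left ?_ (abs_nonneg C))
            exact pow_le_pow_left₀ (abs_nonneg x) (key x hx) n)
    left_mem_uIcc right_mem_uIcc
  calc ‖g h‖ = ‖g h - g 0‖ := by rw [h0, sub_zero]
    _ ≤ |C| * |h| ^ n * ‖h - 0‖ := hmvt
    _ = |C| * ‖h ^ (n + 1)‖ := by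
        rw [sub_zero, Real.norm_eq_abs, Real.norm_eq_abs, abs_pow, pow_succ]
        ring

lemma bigO_base {g g' : ℝ → ℝ} (h0 : g 0 = 0)
    (hd : ∀ᶠ t in 𝓝 (0:ℝ), HasDerivAt g (g' t) t)
    (hc : ContinuousAt g' 0) :
    g =O[𝓝 (0:ℝ)] fun t => t ^ 1 := by
  refine bigO_step h0 hd ?_
  have := hc.tendsto.isBigO_one ℝ
  exact this.congr' (Eventually.of_forall fun t => rfl) (Eventually.of_forall fun t => by simp)

lemma peano {f : ℝ → ℝ} (hf : ContDiff ℝ (∞ : WithTop ℕ∞) f) (y₀ : ℝ) :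
    (fun h : ℝ => f (y₀ + h) - (f y₀ + deriv f y₀ * h + deriv (deriv f) y₀ / 2 * h ^ 2))
      =O[𝓝 (0:ℝ)] fun h => h ^ 3 := by
  have hfd : Differentiable ℝ f := hf.differentiable (by norm_num)
  have hdf : ContDiff ℝ (∞ : WithTop ℕ∞) (deriv f) := (contDiff_infty_iff_deriv.mp hf).2
  have hdfd : Differentiable ℝ (deriv f) := hdf.differentiable (by norm_num)
  have hddf : ContDiff ℝ (∞ : WithTop ℕ∞) (deriv (deriv f)) := (contDiff_infty_iff_deriv.mp hdf).2
  have hddfd : Differentiable ℝ (deriv (deriv f)) := hddf.differentiable (by norm_num)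
  have hd3c : Continuous (deriv (deriv (deriv f))) := hddf.continuous_deriv (by norm_num)
  have key : ∀ (g : ℝ → ℝ), Differentiable ℝ g → ∀ x : ℝ,
      HasDerivAt (fun h : ℝ => g (y₀ + h)) (deriv g (y₀ + x)) x := by
    intro g hg x
    have h1 : HasDerivAt (fun h : ℝ => y₀ + h) 1 x := (hasDerivAt_id x).const_add y₀
    simpa [Function.comp_def] using ((hg (y₀ + x)).hasDerivAt).comp x h1
  -- level 2
  have hO2 : (fun h : ℝ => deriv (deriv f) (y₀ + h) - deriv (deriv f) y₀)
      =O[𝓝 (0:ℝ)] fun h => h ^ 1 := by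
    refine bigO_base (g' := fun h : ℝ => deriv (deriv (deriv f)) (y₀ + h)) (by simp)
      (Eventually.of_forall fun x => ?_) ?_
    · exact (key _ hddfd x).sub_const _
    · exact (hd3c.comp (continuous_const.add continuous_id)).continuousAt
  -- level 1
  have hO1 : (fun h : ℝ => deriv f (y₀ + h) - (deriv f y₀ + deriv (deriv f) y₀ * h))
      =O[𝓝 (0:ℝ)] fun h => h ^ 2 := by
    refine bigO_step (by simp) (Eventually.of_forall fun x => ?_) hO2
    have hp : HasDerivAt (fun h : ℝ => deriv f y₀ + deriv (deriv f) y₀ * h)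
        (deriv (deriv f) y₀) x := by
      simpa using ((hasDerivAt_id x).const_mul (deriv (deriv f) y₀)).const_add (deriv f y₀)
    exact (key _ hdfd x).sub hp
  -- level 0
  refine bigO_step (by simp) (Eventually.of_forall fun x => ?_) hO1
  have hp : HasDerivAt (fun h : ℝ => f y₀ + deriv f y₀ * h + deriv (deriv f) y₀ / 2 * h ^ 2)
      (deriv f y₀ + deriv (deriv f) y₀ * x) x := by
    have h1 := ((hasDerivAt_id x).const_mul (deriv f y₀)).const_add (f y₀)
    have h2 := (hasDerivAt_pow 2 x).const_mul (deriv (deriv f) y₀ / 2)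
    exact (h1.add h2).congr_deriv (by push_cast; ring)
  exact (key _ hfd x).sub hp

lemma ode_taylor {f : ℝ → ℝ} (hf : ContDiff ℝ (∞ : WithTop ℕ∞) f) {y₀ ε : ℝ} (hε : 0 < ε)
    {y : ℝ → ℝ} (hy0 : y 0 = y₀)
    (hy : ∀ t ∈ Set.Ioo (-ε) ε, HasDerivAt y (f (y t)) t) :
    (fun t => y t - (y₀ + t * f y₀ + t ^ 2 / 2 * (deriv f y₀ * f y₀) +
        t ^ 3 / 6 * (deriv (deriv f) y₀ * f y₀ ^ 2 + deriv f y₀ * (deriv f y₀ * f y₀))))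
      =O[𝓝 (0:ℝ)] fun t => t ^ 4 := by
  have hfd : Differentiable ℝ f := hf.differentiable (by norm_num)
  have hdf : ContDiff ℝ (∞ : WithTop ℕ∞) (deriv f) := (contDiff_infty_iff_deriv.mp hf).2
  have hdfd : Differentiable ℝ (deriv f) := hdf.differentiable (by norm_num)
  have hddf : ContDiff ℝ (∞ : WithTop ℕ∞) (deriv (deriv f)) := (contDiff_infty_iff_deriv.mp hdf).2
  have hddfd : Differentiable ℝ (deriv (deriv f)) := hddf.differentiable (by norm_num)
  have hd3c : Continuous (deriv (deriv (deriv f))) := hddf.continuous_deriv (by norm_num)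
  have hmem0 : (0:ℝ) ∈ Set.Ioo (-ε) ε := ⟨by linarith, hε⟩
  have hIoo : Set.Ioo (-ε) ε ∈ 𝓝 (0:ℝ) := Ioo_mem_nhds (by linarith) hε
  have hyc : ContinuousAt y 0 := (hy 0 hmem0).continuousAt
  -- composition derivative facts
  have hfy : ∀ t ∈ Set.Ioo (-ε) ε,
      HasDerivAt (fun s => f (y s)) (deriv f (y t) * f (y t)) t := fun t ht => by
    simpa [Function.comp_def] using ((hfd (y t)).hasDerivAt).comp t (hy t ht)
  have hdfy : ∀ t ∈ Set.Ioo (-ε) ε,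
      HasDerivAt (fun s => deriv f (y s)) (deriv (deriv f) (y t) * f (y t)) t := fun t ht => by
    simpa [Function.comp_def] using ((hdfd (y t)).hasDerivAt).comp t (hy t ht)
  have hddfy : ∀ t ∈ Set.Ioo (-ε) ε,
      HasDerivAt (fun s => deriv (deriv f) (y s)) (deriv (deriv (deriv f)) (y t) * f (y t)) t :=
    fun t ht => by
    simpa [Function.comp_def] using ((hddfd (y t)).hasDerivAt).comp t (hy t ht)
  -- Level 3 : R₃ =O t
  have hO3 : (fun s => deriv (deriv f) (y s) * f (y s) * f (y s) +
        deriv f (y s) * (deriv f (y s) * f (y s)) -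
        (deriv (deriv f) y₀ * f y₀ ^ 2 + deriv f y₀ * (deriv f y₀ * f y₀)))
      =O[𝓝 (0:ℝ)] fun t => t ^ 1 := by
    refine bigO_base
      (g' := fun t => deriv (deriv (deriv f)) (y t) * f (y t) ^ 3 +
        4 * (deriv (deriv f) (y t) * (deriv f (y t) * f (y t) ^ 2)) +
        deriv f (y t) ^ 3 * f (y t))
      (by rw [hy0]; ring) ?_ ?_
    · filter_upwards [hIoo] with t ht
      have hb := ((((hddfy t ht).mul (hfy t ht)).mul (hfy t ht)).add
        ((hdfy t ht).mul ((hdfy t ht).mul (hfy t ht)))).sub_const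
        (deriv (deriv f) y₀ * f y₀ ^ 2 + deriv f y₀ * (deriv f y₀ * f y₀))
      exact hb.congr_deriv (by simp only [Pi.mul_apply]; ring)
    · have h1 : ContinuousAt (fun s => f (y s)) 0 := (hf.continuous.continuousAt).comp hyc
      have h2 : ContinuousAt (fun s => deriv f (y s)) 0 :=
        (hdf.continuous.continuousAt).comp hyc
      have h3 : ContinuousAt (fun s => deriv (deriv f) (y s)) 0 :=
        (hddf.continuous.continuousAt).comp hyc
      have h4 : ContinuousAt (fun s => deriv (deriv (deriv f)) (y s)) 0 :=
        (hd3c.continuousAt).comp hyc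
      exact ((h4.mul (h1.pow 3)).add ((h3.mul (h2.mul (h1.pow 2))).const_mul 4)).add
        ((h2.pow 3).mul h1)
  -- Level 2 : R₂ =O t²
  have hO2 : (fun s => deriv f (y s) * f (y s) -
        (deriv f y₀ * f y₀ + s * (deriv (deriv f) y₀ * f y₀ ^ 2 +
          deriv f y₀ * (deriv f y₀ * f y₀))))
      =O[𝓝 (0:ℝ)] fun t => t ^ 2 := by
    refine bigO_step (by rw [hy0]; ring) ?_ hO3
    filter_upwards [hIoo] with t ht
    have hp : HasDerivAt (fun s : ℝ => deriv f y₀ * f y₀ + s *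
        (deriv (deriv f) y₀ * f y₀ ^ 2 + deriv f y₀ * (deriv f y₀ * f y₀)))
        (deriv (deriv f) y₀ * f y₀ ^ 2 + deriv f y₀ * (deriv f y₀ * f y₀)) t := by
      simpa using ((hasDerivAt_id t).mul_const _).const_add (deriv f y₀ * f y₀)
    exact ((hdfy t ht).mul (hfy t ht)).sub hp
  -- Level 1 : R₁ =O t³
  have hO1 : (fun s => f (y s) - (f y₀ + s * (deriv f y₀ * f y₀) + s ^ 2 / 2 *
        (deriv (deriv f) y₀ * f y₀ ^ 2 + deriv f y₀ * (deriv f y₀ * f y₀))))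
      =O[𝓝 (0:ℝ)] fun t => t ^ 3 := by
    refine bigO_step (by rw [hy0]; ring) ?_ hO2
    filter_upwards [hIoo] with t ht
    have hp : HasDerivAt (fun s : ℝ => f y₀ + s * (deriv f y₀ * f y₀) + s ^ 2 / 2 *
        (deriv (deriv f) y₀ * f y₀ ^ 2 + deriv f y₀ * (deriv f y₀ * f y₀)))
        (deriv f y₀ * f y₀ + t * (deriv (deriv f) y₀ * f y₀ ^ 2 +
          deriv f y₀ * (deriv f y₀ * f y₀))) t := by
      have h1 := ((hasDerivAt_id t).mul_const (deriv f y₀ * f y₀)).const_add (f y₀)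
      have h2 := ((hasDerivAt_pow 2 t).div_const 2).mul_const
        (deriv (deriv f) y₀ * f y₀ ^ 2 + deriv f y₀ * (deriv f y₀ * f y₀))
      exact (h1.add h2).congr_deriv (by push_cast; ring)
    exact (hfy t ht).sub hp
  -- Level 0
  refine bigO_step (by rw [hy0]; ring) ?_ hO1
  filter_upwards [hIoo] with t ht
  have hp : HasDerivAt (fun s : ℝ => y₀ + s * f y₀ + s ^ 2 / 2 * (deriv f y₀ * f y₀) +
      s ^ 3 / 6 * (deriv (deriv f) y₀ * f y₀ ^ 2 + deriv f y₀ * (deriv f y₀ * f y₀)))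
      (f y₀ + t * (deriv f y₀ * f y₀) + t ^ 2 / 2 *
        (deriv (deriv f) y₀ * f y₀ ^ 2 + deriv f y₀ * (deriv f y₀ * f y₀))) t := by
    have h1 := ((hasDerivAt_id t).mul_const (f y₀)).const_add y₀
    have h2 := ((hasDerivAt_pow 2 t).div_const 2).mul_const (deriv f y₀ * f y₀)
    have h3 := ((hasDerivAt_pow 3 t).div_const 6).mul_const
      (deriv (deriv f) y₀ * f y₀ ^ 2 + deriv f y₀ * (deriv f y₀ * f y₀))
    exact ((h1.add h2).add h3).congr_deriv (by push_cast; ring)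
  exact (hy t ht).sub hp

set_option maxHeartbeats 1600000 in
theorem stmt_14 (f : ℝ → ℝ) (hf : ContDiff ℝ (⊤ : ℕ∞) f) (y₀ : ℝ) (y : ℝ → ℝ)
    (ε : ℝ) (hε : 0 < ε) (hy0 : y 0 = y₀)
    (hy : ∀ t ∈ Set.Ioo (-ε) ε, HasDerivAt y (f (y t)) t)
    (k₁ k₂ k₃ k₄ k₅ : ℝ → ℝ)
    (hk₁ : ∀ Δt : ℝ, k₁ Δt = Δt * f y₀)
    (hk₂ : ∀ Δt : ℝ, k₂ Δt = Δt * f (y₀ + k₁ Δt / 5))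
    (hk₃ : ∀ Δt : ℝ, k₃ Δt = Δt * f (y₀ + 3 * k₁ Δt / 40 + 9 * k₂ Δt / 40))
    (hk₄ : ∀ Δt : ℝ, k₄ Δt = Δt * f (y₀ + 3 * k₁ Δt / 10 - 9 * k₂ Δt / 10 + 6 * k₃ Δt / 5))
    (hk₅ : ∀ Δt : ℝ, k₅ Δt =
      Δt * f (y₀ - 11 * k₁ Δt / 54 + 5 * k₂ Δt / 2 - 70 * k₃ Δt / 27 + 35 * k₄ Δt / 27))
    (P : ℝ → ℝ → ℝ)
    (hP : ∀ (Δt χ : ℝ),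
      P Δt χ = y₀ + χ * k₁ Δt +
        χ ^ 2 / 2 * (-(8 / 3) * k₁ Δt + 25 / 6 * k₄ Δt - 3 / 2 * k₅ Δt) +
        χ ^ 3 / 6 * (10 / 3 * k₁ Δt - 25 / 3 * k₄ Δt + 5 * k₅ Δt)) :
    (fun Δt : ℝ => ⨆ χ : Set.Icc (0 : ℝ) 1, |P Δt χ - y ((χ : ℝ) * Δt)|)
      =O[𝓝[>] (0 : ℝ)] fun Δt : ℝ => Δt ^ 4 := by
  have hf8 : ContDiff ℝ (∞ : WithTop ℕ∞) f := hf.of_le (by simp)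
  have hρ := peano hf8 y₀
  have hR := ode_taylor hf8 hε hy0 hy
  have pow34 : (fun t : ℝ => t ^ 4) =O[𝓝 (0:ℝ)] fun t => t ^ 3 :=
    pow_isBigO_pow_nhds_zero (by norm_num)
  -- stage 2
  have hw2 : (fun t : ℝ => k₁ t / 5 - (1/5 * t * f y₀ + 0 * t ^ 2 * (deriv f y₀ * f y₀)))
      =O[𝓝 (0:ℝ)] fun t => t ^ 3 := by
    have he : (fun t : ℝ => k₁ t / 5 - (1/5 * t * f y₀ + 0 * t ^ 2 * (deriv f y₀ * f y₀)))
        = fun _ => (0:ℝ) := funext fun t => by simp only [hk₁]; ring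
    rw [he]; exact isBigO_zero _ _
  have D2 : (fun t : ℝ => k₂ t - (t * f y₀ + 1/5 * t ^ 2 * (deriv f y₀ * f y₀) +
      t ^ 3 * ((1/5) ^ 2 / 2 * (deriv (deriv f) y₀ * f y₀ ^ 2) +
        0 * (deriv f y₀ * (deriv f y₀ * f y₀))))) =O[𝓝 (0:ℝ)] fun t => t ^ 4 := by
    refine (stage_s14 hρ (1/5) 0 hw2).congr' (Eventually.of_forall fun t => ?_) EventuallyEq.rfl
    simp only [hk₂]
  -- stage 3
  have hw3 : (fun t : ℝ => (3 * k₁ t / 40 + 9 * k₂ t / 40) -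
      (3/10 * t * f y₀ + 9/200 * t ^ 2 * (deriv f y₀ * f y₀)))
      =O[𝓝 (0:ℝ)] fun t => t ^ 3 := by
    refine (((D2.const_mul_left (9/40)).trans pow34).add
      (const_mul_pow_isBigO ((9/40) * ((1/5) ^ 2 / 2 * (deriv (deriv f) y₀ * f y₀ ^ 2) +
        0 * (deriv f y₀ * (deriv f y₀ * f y₀)))) (le_refl 3))).congr'
      (Eventually.of_forall fun t => ?_) EventuallyEq.rfl
    simp only [hk₁]; ring
  have D3 : (fun t : ℝ => k₃ t - (t * f y₀ + 3/10 * t ^ 2 * (deriv f y₀ * f y₀) +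
      t ^ 3 * ((3/10) ^ 2 / 2 * (deriv (deriv f) y₀ * f y₀ ^ 2) +
        9/200 * (deriv f y₀ * (deriv f y₀ * f y₀))))) =O[𝓝 (0:ℝ)] fun t => t ^ 4 := by
    refine (stage_s14 hρ (3/10) (9/200) hw3).congr' (Eventually.of_forall fun t => ?_)
      EventuallyEq.rfl
    simp only [hk₃]
    rw [show y₀ + (3 * k₁ t / 40 + 9 * k₂ t / 40)
      = y₀ + 3 * k₁ t / 40 + 9 * k₂ t / 40 from by ring]
  -- stage 4
  have hw4 : (fun t : ℝ => (3 * k₁ t / 10 - 9 * k₂ t / 10 + 6 * k₃ t / 5) -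
      (3/5 * t * f y₀ + 9/50 * t ^ 2 * (deriv f y₀ * f y₀)))
      =O[𝓝 (0:ℝ)] fun t => t ^ 3 := by
    refine ((((D2.const_mul_left (-(9/10))).add (D3.const_mul_left (6/5))).trans pow34).add
      (const_mul_pow_isBigO
        (-(9/10) * ((1/5) ^ 2 / 2 * (deriv (deriv f) y₀ * f y₀ ^ 2) +
            0 * (deriv f y₀ * (deriv f y₀ * f y₀))) +
          6/5 * ((3/10) ^ 2 / 2 * (deriv (deriv f) y₀ * f y₀ ^ 2) +
            9/200 * (deriv f y₀ * (deriv f y₀ * f y₀)))) (le_refl 3))).congr'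
      (Eventually.of_forall fun t => ?_) EventuallyEq.rfl
    simp only [hk₁]; ring
  have D4 : (fun t : ℝ => k₄ t - (t * f y₀ + 3/5 * t ^ 2 * (deriv f y₀ * f y₀) +
      t ^ 3 * ((3/5) ^ 2 / 2 * (deriv (deriv f) y₀ * f y₀ ^ 2) +
        9/50 * (deriv f y₀ * (deriv f y₀ * f y₀))))) =O[𝓝 (0:ℝ)] fun t => t ^ 4 := by
    refine (stage_s14 hρ (3/5) (9/50) hw4).congr' (Eventually.of_forall fun t => ?_)
      EventuallyEq.rfl
    simp only [hk₄]
    rw [show y₀ + (3 * k₁ t / 10 - 9 * k₂ t / 10 + 6 * k₃ t / 5)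
      = y₀ + 3 * k₁ t / 10 - 9 * k₂ t / 10 + 6 * k₃ t / 5 from by ring]
  -- stage 5
  have hw5 : (fun t : ℝ => (-(11 * k₁ t / 54) + 5 * k₂ t / 2 - 70 * k₃ t / 27 + 35 * k₄ t / 27) -
      (1 * t * f y₀ + 1/2 * t ^ 2 * (deriv f y₀ * f y₀)))
      =O[𝓝 (0:ℝ)] fun t => t ^ 3 := by
    refine (((((D2.const_mul_left (5/2)).add (D3.const_mul_left (-(70/27)))).add
        (D4.const_mul_left (35/27))).trans pow34).add
      (const_mul_pow_isBigO
        (5/2 * ((1/5) ^ 2 / 2 * (deriv (deriv f) y₀ * f y₀ ^ 2) +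
            0 * (deriv f y₀ * (deriv f y₀ * f y₀))) +
          -(70/27) * ((3/10) ^ 2 / 2 * (deriv (deriv f) y₀ * f y₀ ^ 2) +
            9/200 * (deriv f y₀ * (deriv f y₀ * f y₀))) +
          35/27 * ((3/5) ^ 2 / 2 * (deriv (deriv f) y₀ * f y₀ ^ 2) +
            9/50 * (deriv f y₀ * (deriv f y₀ * f y₀)))) (le_refl 3))).congr'
      (Eventually.of_forall fun t => ?_) EventuallyEq.rfl
    simp only [hk₁]; ring
  have D5 : (fun t : ℝ => k₅ t - (t * f y₀ + 1 * t ^ 2 * (deriv f y₀ * f y₀) +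
      t ^ 3 * ((1:ℝ) ^ 2 / 2 * (deriv (deriv f) y₀ * f y₀ ^ 2) +
        1/2 * (deriv f y₀ * (deriv f y₀ * f y₀))))) =O[𝓝 (0:ℝ)] fun t => t ^ 4 := by
    refine (stage_s14 hρ 1 (1/2) hw5).congr' (Eventually.of_forall fun t => ?_) EventuallyEq.rfl
    simp only [hk₅]
    rw [show y₀ + (-(11 * k₁ t / 54) + 5 * k₂ t / 2 - 70 * k₃ t / 27 + 35 * k₄ t / 27)
      = y₀ - 11 * k₁ t / 54 + 5 * k₂ t / 2 - 70 * k₃ t / 27 + 35 * k₄ t / 27 from by ring]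
  -- order conditions for the interpolant coefficients
  have HA : (fun t : ℝ => -(8/3) * k₁ t + 25/6 * k₄ t - 3/2 * k₅ t -
      t ^ 2 * (deriv f y₀ * f y₀)) =O[𝓝 (0:ℝ)] fun t => t ^ 4 := by
    refine ((D4.const_mul_left (25/6)).sub (D5.const_mul_left (3/2))).congr'
      (Eventually.of_forall fun t => ?_) EventuallyEq.rfl
    simp only [hk₁]; ring
  have HB : (fun t : ℝ => 10/3 * k₁ t - 25/3 * k₄ t + 5 * k₅ t -
      t ^ 3 * (deriv (deriv f) y₀ * f y₀ ^ 2 + deriv f y₀ * (deriv f y₀ * f y₀)))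
      =O[𝓝 (0:ℝ)] fun t => t ^ 4 := by
    refine ((D4.const_mul_left (-(25/3))).add (D5.const_mul_left 5)).congr'
      (Eventually.of_forall fun t => ?_) EventuallyEq.rfl
    simp only [hk₁]; ring
  -- extract constants
  obtain ⟨CA, hCA⟩ := HA.bound
  obtain ⟨CB, hCB⟩ := HB.bound
  obtain ⟨CR, hCR0⟩ := hR.bound
  obtain ⟨δ, hδpos, hCR⟩ := Metric.eventually_nhds_iff.mp hCR0
  rw [isBigO_iff]
  refine ⟨|CA|/2 + |CB|/6 + |CR|, ?_⟩
  have hev3 : ∀ᶠ t : ℝ in 𝓝 0, |t| < δ := by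
    filter_upwards [Metric.ball_mem_nhds (0:ℝ) hδpos] with t ht
    simpa [Real.dist_eq] using ht
  filter_upwards [hCA.filter_mono nhdsWithin_le_nhds, hCB.filter_mono nhdsWithin_le_nhds,
    hev3.filter_mono nhdsWithin_le_nhds, self_mem_nhdsWithin] with t hA hB hδt htpos
  have ht : (0:ℝ) < t := htpos
  have ht4 : |t ^ 4| = t ^ 4 := abs_of_nonneg (by positivity)
  have hAbs : |(-(8/3) * k₁ t + 25/6 * k₄ t - 3/2 * k₅ t - t ^ 2 * (deriv f y₀ * f y₀))|
      ≤ |CA| * t ^ 4 := by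
    have h := hA
    simp only [Real.norm_eq_abs] at h
    rw [ht4] at h
    exact h.trans (mul_le_mul_of_nonneg_right (le_abs_self CA) (by positivity))
  have hBbs : |(10/3 * k₁ t - 25/3 * k₄ t + 5 * k₅ t -
      t ^ 3 * (deriv (deriv f) y₀ * f y₀ ^ 2 + deriv f y₀ * (deriv f y₀ * f y₀)))|
      ≤ |CB| * t ^ 4 := by
    have h := hB
    simp only [Real.norm_eq_abs] at h
    rw [ht4] at h
    exact h.trans (mul_le_mul_of_nonneg_right (le_abs_self CB) (by positivity))
  have hbound : ∀ χ : Set.Icc (0:ℝ) 1,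
      |P t ↑χ - y (↑χ * t)| ≤ (|CA|/2 + |CB|/6 + |CR|) * t ^ 4 := by
    rintro ⟨χ, hχ0, hχ1⟩
    show |P t χ - y (χ * t)| ≤ (|CA|/2 + |CB|/6 + |CR|) * t ^ 4
    have hident : P t χ - y (χ * t) =
        χ ^ 2 / 2 * (-(8/3) * k₁ t + 25/6 * k₄ t - 3/2 * k₅ t -
          t ^ 2 * (deriv f y₀ * f y₀)) +
        χ ^ 3 / 6 * (10/3 * k₁ t - 25/3 * k₄ t + 5 * k₅ t -
          t ^ 3 * (deriv (deriv f) y₀ * f y₀ ^ 2 + deriv f y₀ * (deriv f y₀ * f y₀))) -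
        (y (χ * t) - (y₀ + (χ * t) * f y₀ + (χ * t) ^ 2 / 2 * (deriv f y₀ * f y₀) +
          (χ * t) ^ 3 / 6 * (deriv (deriv f) y₀ * f y₀ ^ 2 +
            deriv f y₀ * (deriv f y₀ * f y₀)))) := by
      rw [hP, hk₁]; ring
    rw [hident]
    have tri : ∀ a b c : ℝ, |a + b - c| ≤ |a| + |b| + |c| := by
      intro a b c
      have h1 : |a + b - c| ≤ |a + b| + |c| := by
        simpa [sub_eq_add_neg, abs_neg] using abs_add_le (a + b) (-c)
      linarith only [h1, abs_add_le a b]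
    refine (tri _ _ _).trans ?_
    have e1 : |χ ^ 2 / 2 * (-(8/3) * k₁ t + 25/6 * k₄ t - 3/2 * k₅ t -
        t ^ 2 * (deriv f y₀ * f y₀))| ≤ |CA| / 2 * t ^ 4 := by
      rw [abs_mul]
      have hh : |χ ^ 2 / 2| ≤ 1/2 := by
        rw [abs_of_nonneg (by positivity)]
        have hp := pow_le_one₀ hχ0 hχ1 (n := 2)
        linarith only [hp]
      calc |χ ^ 2 / 2| * |(-(8/3) * k₁ t + 25/6 * k₄ t - 3/2 * k₅ t -
            t ^ 2 * (deriv f y₀ * f y₀))| ≤ 1/2 * (|CA| * t ^ 4) :=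
            mul_le_mul hh hAbs (abs_nonneg _) (by norm_num)
        _ = |CA| / 2 * t ^ 4 := by ring
    have e2 : |χ ^ 3 / 6 * (10/3 * k₁ t - 25/3 * k₄ t + 5 * k₅ t -
        t ^ 3 * (deriv (deriv f) y₀ * f y₀ ^ 2 + deriv f y₀ * (deriv f y₀ * f y₀)))|
        ≤ |CB| / 6 * t ^ 4 := by
      rw [abs_mul]
      have hh : |χ ^ 3 / 6| ≤ 1/6 := by
        rw [abs_of_nonneg (by positivity)]
        have hp := pow_le_one₀ hχ0 hχ1 (n := 3)
        linarith only [hp]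
      calc |χ ^ 3 / 6| * |(10/3 * k₁ t - 25/3 * k₄ t + 5 * k₅ t -
            t ^ 3 * (deriv (deriv f) y₀ * f y₀ ^ 2 + deriv f y₀ * (deriv f y₀ * f y₀)))|
            ≤ 1/6 * (|CB| * t ^ 4) :=
            mul_le_mul hh hBbs (abs_nonneg _) (by norm_num)
        _ = |CB| / 6 * t ^ 4 := by ring
    have e3 : |y (χ * t) - (y₀ + (χ * t) * f y₀ + (χ * t) ^ 2 / 2 * (deriv f y₀ * f y₀) +
        (χ * t) ^ 3 / 6 * (deriv (deriv f) y₀ * f y₀ ^ 2 +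
          deriv f y₀ * (deriv f y₀ * f y₀)))| ≤ |CR| * t ^ 4 := by
      have hdist : dist (χ * t) 0 < δ := by
        rw [Real.dist_eq, sub_zero, abs_of_nonneg (mul_nonneg hχ0 ht.le)]
        calc χ * t ≤ 1 * t := mul_le_mul_of_nonneg_right hχ1 ht.le
          _ = t := one_mul t
          _ ≤ |t| := le_abs_self t
          _ < δ := hδt
      have h := hCR hdist
      simp only [Real.norm_eq_abs] at h
      rw [abs_of_nonneg (show (0:ℝ) ≤ (χ * t) ^ 4 by positivity)] at h
      refine h.trans ?_
      have hχ4 : χ ^ 4 ≤ 1 := pow_le_one₀ hχ0 hχ1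
      have h3 : (χ * t) ^ 4 ≤ t ^ 4 := by
        rw [mul_pow]
        exact mul_le_of_le_one_left (pow_nonneg ht.le 4) hχ4
      calc CR * (χ * t) ^ 4 ≤ |CR| * (χ * t) ^ 4 :=
            mul_le_mul_of_nonneg_right (le_abs_self CR) (by positivity)
        _ ≤ |CR| * t ^ 4 := mul_le_mul_of_nonneg_left h3 (abs_nonneg CR)
    linarith only [e1, e2, e3]
  haveI hne : Nonempty (Set.Icc (0:ℝ) 1) := ⟨⟨0, le_refl 0, zero_le_one⟩⟩
  have hbdd : BddAbove (Set.range fun χ : Set.Icc (0:ℝ) 1 => |P t ↑χ - y (↑χ * t)|) :=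
    ⟨(|CA|/2 + |CB|/6 + |CR|) * t ^ 4, by rintro x ⟨χ, rfl⟩; exact hbound χ⟩
  have hge : (0:ℝ) ≤ ⨆ χ : Set.Icc (0:ℝ) 1, |P t ↑χ - y (↑χ * t)| :=
    le_trans (abs_nonneg _) (le_ciSup hbdd ⟨0, le_refl 0, zero_le_one⟩)
  rw [Real.norm_eq_abs, abs_of_nonneg hge, Real.norm_eq_abs, ht4]
  exact ciSup_le hbound
end

section
/- Let c > 0 and p ∈ ℤ, and let u_n(t) = e^{−ct}(ct)^{n−p}/(n−p)! for n ≥ p, u_n(t) = 0 for n < p, be the solution of the upwind system u̇_n = −c(u_n − u_{n−1}) with u_n(0) = δ_{n,p}. Then for each integer j ≥ 1, sup_{t ≥ 0} |u_{p+j}(t)| = e^{−j} j^j / j!, and this quantity tends to 0 as j → ∞. Hence for every ε > 0 there exists an integer d, independent of t, such that |u_n(t)| < ε for all t ≥ 0 whenever |n − p| > d; i.e. the upwind discretization of the advection equation with positive wave speed is strongly local. -/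
/-! The solution is a Poisson profile: `u (p + j) t = e^{-s} s^j / j!` with `s = c t`. By
`x ≤ e^{x - 1}` at `x = s / j`, the function `s ↦ e^{-s} s^j` is maximal at `s = j`, i.e. at
`t = j / c`. Stirling's lower bound `j! ≥ √(2πj) (j/e)^j` then bounds the maximum by
`1 / √(2πj)`, uniformly in `t`, which gives the strong locality. -/

open Real Filter Topology Nat

lemma exp_neg_mul_pow_le (j : ℕ) {s : ℝ} (hs : 0 ≤ s) :
    exp (-s) * s ^ j ≤ exp (-j) * (j : ℝ) ^ j := by
  rcases eq_or_ne j 0 with rfl | hj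
  · simpa using hs
  have hj' : (j : ℝ) ≠ 0 := by exact_mod_cast hj
  calc exp (-s) * s ^ j = exp (-s) * ((j : ℝ) ^ j * (s / j) ^ j) := by
        rw [← mul_pow, mul_div_cancel₀ _ hj']
    _ ≤ exp (-s) * ((j : ℝ) ^ j * exp (s / j - 1) ^ j) := by
        gcongr
        linarith [add_one_le_exp (s / j - 1)]
    _ = exp (-j) * (j : ℝ) ^ j := by
        rw [← exp_nat_mul, mul_sub, mul_div_cancel₀ _ hj', mul_one, mul_left_comm, ← exp_add]
        ring_nf

lemma exp_neg_mul_pow_self_div_factorial_le {n : ℕ} (hn : n ≠ 0) :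
    exp (-n) * (n : ℝ) ^ n / n ! ≤ (√(2 * π * n))⁻¹ := by
  have hstirling := Stirling.le_factorial_stirling n
  rw [div_pow, ← exp_nat_mul, mul_one] at hstirling
  rw [div_le_iff₀ (by positivity), ← div_eq_inv_mul, le_div_iff₀ (by positivity), exp_neg]
  calc (exp n)⁻¹ * n ^ n * √(2 * π * n) = √(2 * π * n) * (n ^ n / exp n) := by ring
    _ ≤ n ! := hstirling

lemma tendsto_exp_neg_mul_pow_self_div_factorial :
    Tendsto (fun n : ℕ => exp (-n) * (n : ℝ) ^ n / n !) atTop (𝓝 0) := by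
  have hsqrt : Tendsto (fun n : ℕ => √(2 * π * n)) atTop atTop :=
    tendsto_sqrt_atTop.comp <| tendsto_natCast_atTop_atTop.const_mul_atTop (by positivity)
  refine squeeze_zero' (Eventually.of_forall fun n => by positivity) ?_ hsqrt.inv_tendsto_atTop
  filter_upwards [eventually_ne_atTop 0] with n hn
  exact exp_neg_mul_pow_self_div_factorial_le hn

theorem stmt_19 (c : ℝ) (hc : 0 < c) (p : ℤ) (u : ℤ → ℝ → ℝ)
    (hu : ∀ (n : ℤ) (t : ℝ),
      u n t = if p ≤ n then
        Real.exp (-c * t) * (c * t) ^ (n - p).toNat / (Nat.factorial (n - p).toNat : ℝ)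
      else 0) :
    (∀ j : ℕ, 1 ≤ j →
      (⨆ t : Set.Ici (0 : ℝ), |u (p + j) (t : ℝ)|) =
        Real.exp (-(j : ℝ)) * (j : ℝ) ^ j / (Nat.factorial j : ℝ)) ∧
    Filter.Tendsto (fun j : ℕ => Real.exp (-(j : ℝ)) * (j : ℝ) ^ j / (Nat.factorial j : ℝ))
      Filter.atTop (𝓝 0) ∧
    ∀ ε : ℝ, 0 < ε → ∃ d : ℕ, ∀ n : ℤ, (d : ℤ) < |n - p| →
      ∀ t : ℝ, 0 ≤ t → |u n t| < ε := by
  have hshift (j : ℕ) (t : ℝ) : u (p + j) t = exp (-(c * t)) * (c * t) ^ j / j ! := by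
    rw [hu, if_pos (by omega), neg_mul]
    simp
  have hbound (j : ℕ) {t : ℝ} (ht : 0 ≤ t) : |u (p + j) t| ≤ exp (-j) * (j : ℝ) ^ j / j ! := by
    rw [hshift, abs_of_nonneg (by positivity)]
    gcongr ?_ / _
    exact exp_neg_mul_pow_le j (by positivity)
  have hpeak (j : ℕ) : u (p + j) (j / c) = exp (-j) * (j : ℝ) ^ j / j ! := by
    rw [hshift, mul_div_cancel₀ _ hc.ne']
  refine ⟨fun j _ => ?_, tendsto_exp_neg_mul_pow_self_div_factorial, fun ε hε => ?_⟩
  · have hmax : IsMaxOn (fun t => |u (p + j) t|) (Set.Ici 0) (j / c) := fun t ht => by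
      simpa [hpeak, abs_of_nonneg (by positivity : (0 : ℝ) ≤ exp (-j) * (j : ℝ) ^ j / j !)]
        using hbound j ht
    rw [hmax.iSup_eq (Set.mem_Ici.mpr (by positivity)), hpeak, abs_of_nonneg (by positivity)]
  · obtain ⟨d, hd⟩ := eventually_atTop.mp
      (tendsto_exp_neg_mul_pow_self_div_factorial.eventually (gt_mem_nhds hε))
    refine ⟨d, fun n hn t ht => ?_⟩
    obtain hnp | ⟨j, rfl⟩ : n < p ∨ ∃ j : ℕ, n = p + j :=
      (lt_or_ge n p).imp_right fun h => ⟨(n - p).toNat, by omega⟩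
    · simpa [hu, hnp.not_ge] using hε
    · rw [add_sub_cancel_left, Nat.abs_cast, Nat.cast_lt] at hn
      exact (hbound j ht).trans_lt (hd j hn.le)
end
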